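/- arXiv:2104.14057 — 12 statements merged into one kernel-verified Lean document; each statement's English description precedes it below -/
import Mathlib

section
/- Let n ≥ 5 be a natural number and S a real number with S > n; set t = (S − n)/S. Let D be a real number with 0 ≤ D ≤ (2/3)·t·S³. Assume (i) t·S²·(S − 2n) ≥ ((4t² − 9t + 3)/(3(1 − t)))·D − 2t²S²/(1 − t), and (ii) 3D ≤ (S + 2·(D/(12(1 − t)) + S³/(4n))^{1/3})·t·S². Then S > 1.8252·n − 0.712898. -/
/-!
With `N = n` and `t = (S - N) / S`, write `q = 2S² - NS - 4N²` and `W = N(S - 2N) + 2(S - N)`.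
Clearing denominators, hypothesis (i) reads `-q D ≤ 3 S² (S - N) W`.

If `q ≤ 0` this forces `W ≥ 0`, i.e. `S ≥ 2N(N + 1)/(N + 2)`, which already beats the bound.
If `q > 0`, eliminating `D` between (i) and (ii) gives `S m ≤ 2 q Y` with `m = -q - 9W` and `Y` the
cube root in (ii). Cubing, and bounding the radicand with `D ≤ 2(S - N)S²/3`, yields
`9 N m³ ≤ 2 q³ (2S - 2N + 9)`, a polynomial inequality that fails on the strip
`1.68 N ≤ S ≤ 1.8252 N - 0.712898`.
-/

lemma rpow_one_third_pow_three {x : ℝ} (hx : 0 ≤ x) : (x ^ ((1 : ℝ) / 3)) ^ 3 = x := by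
  simpa using Real.rpow_inv_natCast_pow hx (n := 3) three_ne_zero

lemma pinching_lt_of_linear_nonneg {N S : ℝ} (hN : 5 ≤ N)
    (hW : 0 ≤ N * (S - 2 * N) + 2 * (S - N)) : 1.8252 * N - 0.712898 < S := by
  nlinarith

lemma pinching_cubic_lt {N S : ℝ} (hu : 0 ≤ S - 1.68 * N)
    (hv : 0 ≤ 1.8252 * N - 0.712898 - S) :
    2 * (2 * S ^ 2 - N * S - 4 * N ^ 2) ^ 3 * (2 * S - 2 * N + 9) <
      9 * N * (22 * N ^ 2 + 18 * N - 8 * N * S - 2 * S ^ 2 - 18 * S) ^ 3 := by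
  -- a Bernstein-type certificate on the strip
  linarith
    [mul_nonneg (pow_nonneg hu 0) (pow_nonneg hv 1),
      mul_nonneg (pow_nonneg hu 0) (pow_nonneg hv 2),
      mul_nonneg (pow_nonneg hu 0) (pow_nonneg hv 3),
      mul_nonneg (pow_nonneg hu 0) (pow_nonneg hv 4),
      mul_nonneg (pow_nonneg hu 0) (pow_nonneg hv 5),
      mul_nonneg (pow_nonneg hu 0) (pow_nonneg hv 6),
      mul_nonneg (pow_nonneg hu 0) (pow_nonneg hv 7),
      mul_nonneg (pow_nonneg hu 1) (pow_nonneg hv 0),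
      mul_nonneg (pow_nonneg hu 1) (pow_nonneg hv 1),
      mul_nonneg (pow_nonneg hu 1) (pow_nonneg hv 2),
      mul_nonneg (pow_nonneg hu 1) (pow_nonneg hv 3),
      mul_nonneg (pow_nonneg hu 1) (pow_nonneg hv 4),
      mul_nonneg (pow_nonneg hu 1) (pow_nonneg hv 5),
      mul_nonneg (pow_nonneg hu 1) (pow_nonneg hv 6),
      mul_nonneg (pow_nonneg hu 2) (pow_nonneg hv 0),
      mul_nonneg (pow_nonneg hu 2) (pow_nonneg hv 1),
      mul_nonneg (pow_nonneg hu 2) (pow_nonneg hv 2),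
      mul_nonneg (pow_nonneg hu 2) (pow_nonneg hv 3),
      mul_nonneg (pow_nonneg hu 2) (pow_nonneg hv 4),
      mul_nonneg (pow_nonneg hu 2) (pow_nonneg hv 5),
      mul_nonneg (pow_nonneg hu 3) (pow_nonneg hv 0),
      mul_nonneg (pow_nonneg hu 3) (pow_nonneg hv 1),
      mul_nonneg (pow_nonneg hu 3) (pow_nonneg hv 2),
      mul_nonneg (pow_nonneg hu 3) (pow_nonneg hv 3),
      mul_nonneg (pow_nonneg hu 3) (pow_nonneg hv 4),
      mul_nonneg (pow_nonneg hu 4) (pow_nonneg hv 0),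
      mul_nonneg (pow_nonneg hu 4) (pow_nonneg hv 1),
      mul_nonneg (pow_nonneg hu 4) (pow_nonneg hv 2),
      mul_nonneg (pow_nonneg hu 4) (pow_nonneg hv 3),
      mul_nonneg (pow_nonneg hu 5) (pow_nonneg hv 0),
      mul_nonneg (pow_nonneg hu 5) (pow_nonneg hv 1),
      mul_nonneg (pow_nonneg hu 5) (pow_nonneg hv 2),
      mul_nonneg (pow_nonneg hu 6) (pow_nonneg hv 0),
      mul_nonneg (pow_nonneg hu 6) (pow_nonneg hv 1),
      mul_nonneg (pow_nonneg hu 7) (pow_nonneg hv 0)]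

lemma pinching_cubic_le {N S D : ℝ} (hN : 0 < N) (hNS : N < S) (hD0 : 0 ≤ D)
    (hD1 : D ≤ 2 * (S - N) * S ^ 2 / 3) (hq : 0 < 2 * S ^ 2 - N * S - 4 * N ^ 2)
    (h1 : (N * S + 4 * N ^ 2 - 2 * S ^ 2) * D ≤
      3 * S ^ 2 * (S - N) * (N * (S - 2 * N) + 2 * (S - N)))
    (h2 : 3 * D ≤ (S + 2 * (S * (D + 3 * S ^ 2) / (12 * N)) ^ ((1 : ℝ) / 3)) * ((S - N) * S)) :
    9 * N * (22 * N ^ 2 + 18 * N - 8 * N * S - 2 * S ^ 2 - 18 * S) ^ 3 ≤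
      2 * (2 * S ^ 2 - N * S - 4 * N ^ 2) ^ 3 * (2 * S - 2 * N + 9) := by
  set q := 2 * S ^ 2 - N * S - 4 * N ^ 2
  set m := 22 * N ^ 2 + 18 * N - 8 * N * S - 2 * S ^ 2 - 18 * S
  set X := S * (D + 3 * S ^ 2) / (12 * N)
  set Y := X ^ ((1 : ℝ) / 3)
  have hS : 0 < S := hN.trans hNS
  have hSN : 0 < S * (S - N) := mul_pos hS (by linarith)
  have hmY : S * m ≤ 2 * q * Y := by
    have : 0 ≤ S * (S - N) * (2 * q * Y - S * m) := by
      nlinarith [mul_le_mul_of_nonneg_left h2 hq.le]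
    nlinarith [(mul_nonneg_iff_of_pos_left hSN).1 this]
  have hX : X ≤ S ^ 3 * (2 * S - 2 * N + 9) / (36 * N) := by
    rw [div_le_div_iff₀ (by positivity) (by positivity)]
    nlinarith [mul_nonneg (mul_nonneg hN.le hS.le) (sub_nonneg.mpr hD1)]
  have hcube : (S * m) ^ 3 ≤ 8 * q ^ 3 * X := by
    calc (S * m) ^ 3 ≤ (2 * q * Y) ^ 3 := (Odd.pow_le_pow (by decide)).2 hmY
      _ = 8 * q ^ 3 * X := by rw [mul_pow, rpow_one_third_pow_three (by positivity)]; ring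
  have hbound : (S * m) ^ 3 * (9 * N) ≤ S ^ 3 * (2 * q ^ 3 * (2 * S - 2 * N + 9)) := by
    have e : 8 * q ^ 3 * (S ^ 3 * (2 * S - 2 * N + 9) / (36 * N)) =
        S ^ 3 * (2 * q ^ 3 * (2 * S - 2 * N + 9)) / (9 * N) := by
      field_simp; ring
    rw [← le_div_iff₀ (by positivity), ← e]
    exact hcube.trans (mul_le_mul_of_nonneg_left hX (by positivity))
  exact le_of_mul_le_mul_left (by linarith) (pow_pos hS 3)

theorem lt_of_pinching {N S D : ℝ} (hN : 5 ≤ N) (hNS : N < S) (hD0 : 0 ≤ D)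
    (hD1 : D ≤ 2 * (S - N) * S ^ 2 / 3)
    (h1 : (N * S + 4 * N ^ 2 - 2 * S ^ 2) * D ≤
      3 * S ^ 2 * (S - N) * (N * (S - 2 * N) + 2 * (S - N)))
    (h2 : 3 * D ≤ (S + 2 * (S * (D + 3 * S ^ 2) / (12 * N)) ^ ((1 : ℝ) / 3)) * ((S - N) * S)) :
    1.8252 * N - 0.712898 < S := by
  have hS : 0 < S := by linarith
  rcases le_or_gt (2 * S ^ 2 - N * S - 4 * N ^ 2) 0 with hq | hq
  · refine pinching_lt_of_linear_nonneg hN ?_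
    have hpos : 0 < 3 * S ^ 2 * (S - N) := mul_pos (by positivity) (sub_pos.2 hNS)
    exact (mul_nonneg_iff_of_pos_left hpos).1 ((mul_nonneg (by linarith) hD0).trans h1)
  · by_contra! hle
    have hcubic := pinching_cubic_le (by linarith) hNS hD0 hD1 hq h1 h2
    -- `q > 0` puts `S` above the root `(1 + √33) N / 4 ≈ 1.686 N` of `q`
    exact (pinching_cubic_lt (by nlinarith) (by linarith)).not_ge hcubic

theorem stmt_0 (n : ℕ) (hn : 5 ≤ n) (S : ℝ) (hS : (n : ℝ) < S)
    (t : ℝ) (ht : t = (S - n) / S)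
    (D : ℝ) (hD0 : 0 ≤ D) (hD1 : D ≤ 2 / 3 * t * S ^ 3)
    (h1 : t * S ^ 2 * (S - 2 * n) ≥
      (4 * t ^ 2 - 9 * t + 3) / (3 * (1 - t)) * D - 2 * t ^ 2 * S ^ 2 / (1 - t))
    (h2 : 3 * D ≤
      (S + 2 * (D / (12 * (1 - t)) + S ^ 3 / (4 * n)) ^ ((1 : ℝ) / 3)) * t * S ^ 2) :
    S > 1.8252 * n - 0.712898 := by
  have hN : (5 : ℝ) ≤ n := by exact_mod_cast hn
  have hn0 : (0 : ℝ) < n := by linarith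
  have hS0 : 0 < S := by linarith
  have h1t : 1 - t = n / S := by rw [ht]; field_simp; ring
  rw [h1t, ht] at h1 h2
  rw [ht] at hD1
  refine lt_of_pinching hN hS hD0 ?_ ?_ ?_
  · convert hD1 using 1
    field_simp
  · rw [ge_iff_le, sub_le_iff_le_add] at h1
    field_simp at h1
    linarith
  · have hX : D / (12 * (n / S)) + S ^ 3 / (4 * n) = S * (D + 3 * S ^ 2) / (12 * n) := by
      field_simp; ring
    rw [hX, mul_assoc] at h2
    convert h2 using 2
    field_simp
end

section
/- Let n ≥ 5 be a natural number and S a real number with S > n; set t = (S − n)/S. Let D be a real number with 0 ≤ D ≤ (2/3)·t·S³, and assume t·S²·(S − 2n) ≥ ((4t² − 9t + 3)/(3(1 − t)))·D − 2t²S²/(1 − t). Then S ≥ ((√465 − 7)/8)·n − (9/4)·(1 − √465/31). -/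
/-!
Substituting `t S = S - n` and `(1 - t) S = n` turns the hypothesis into
`(4n² + nS - 2S²) D ≤ 3S²(S - n)(n(S - 2n) + 2(S - n))`, which is affine in `D`, so it may be
tested at the endpoints `D = 0` and `D = 2/3 (S - n) S²`. Either way `S` lies beyond the positive
root of `4x² + (7n + 18)x - 26n² - 18n`: directly at the upper endpoint, and at `D = 0`, where
`S ≥ 2n(n + 1)/(n + 2)`, because the quadratic at that point is
`4n²(n² - 3n - 6)/(n + 2)² ≥ 0` for `n ≥ 5`. The bound of the theorem is that root with its
discriminant `465n² + 540n + 324` replaced by the smaller square `(√465 n + 270/√465)²`.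
-/

lemma cleared_of_le_sub {n S t D : ℝ} (hn : 0 < n) (hS : n < S) (ht : t = (S - n) / S)
    (h : (4 * t ^ 2 - 9 * t + 3) / (3 * (1 - t)) * D - 2 * t ^ 2 * S ^ 2 / (1 - t) ≤
      t * S ^ 2 * (S - 2 * n)) :
    (4 * n ^ 2 + n * S - 2 * S ^ 2) * D ≤
      3 * S ^ 2 * (S - n) * (n * (S - 2 * n) + 2 * (S - n)) := by
  have hS0 : 0 < S := hn.trans hS
  have key : t * S ^ 2 * (S - 2 * n) -
      ((4 * t ^ 2 - 9 * t + 3) / (3 * (1 - t)) * D - 2 * t ^ 2 * S ^ 2 / (1 - t)) =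
      (3 * S ^ 2 * (S - n) * (n * (S - 2 * n) + 2 * (S - n)) -
        (4 * n ^ 2 + n * S - 2 * S ^ 2) * D) / (3 * n * S) := by
    have h1t : 1 - t = n / S := by rw [ht]; field_simp; ring
    rw [h1t, ht]
    field_simp
    ring
  have hnum := (le_div_iff₀ (by positivity : 0 < 3 * n * S)).1 (key ▸ sub_nonneg.2 h)
  linarith

lemma quadratic_nonneg_of_two_mul_le {n S : ℝ} (hn : 5 ≤ n)
    (h : 2 * n * (n + 1) ≤ (n + 2) * S) :
    0 ≤ 4 * S ^ 2 + (7 * n + 18) * S - 26 * n ^ 2 - 18 * n := by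
  have hscaled : 4 * n ^ 2 * (n ^ 2 - 3 * n - 6) ≤
      (n + 2) ^ 2 * (4 * S ^ 2 + (7 * n + 18) * S - 26 * n ^ 2 - 18 * n) := by
    nlinarith [mul_nonneg (sub_nonneg.2 h) (by positivity : (0 : ℝ) ≤ 7 * n + 18)]
  have hcorner : 0 ≤ 4 * n ^ 2 * (n ^ 2 - 3 * n - 6) := by
    have : 0 ≤ n ^ 2 - 3 * n - 6 := by nlinarith
    positivity
  exact nonneg_of_mul_nonneg_right (hcorner.trans hscaled) (by positivity)

lemma quadratic_nonneg_of_cleared {n S D : ℝ} (hn : 5 ≤ n) (hS : n < S) (hD0 : 0 ≤ D)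
    (hD1 : D ≤ 2 / 3 * (S - n) * S ^ 2)
    (h : (4 * n ^ 2 + n * S - 2 * S ^ 2) * D ≤
      3 * S ^ 2 * (S - n) * (n * (S - 2 * n) + 2 * (S - n))) :
    0 ≤ 4 * S ^ 2 + (7 * n + 18) * S - 26 * n ^ 2 - 18 * n := by
  have hpos : 0 < S ^ 2 * (S - n) := mul_pos (pow_pos (by linarith) 2) (sub_pos.2 hS)
  rcases le_or_gt 0 (4 * n ^ 2 + n * S - 2 * S ^ 2) with ha | ha
  · apply quadratic_nonneg_of_two_mul_le hn
    have hprod : 0 ≤ S ^ 2 * (S - n) * (n * (S - 2 * n) + 2 * (S - n)) := by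
      linarith [mul_nonneg ha hD0]
    linarith [nonneg_of_mul_nonneg_right hprod hpos]
  · have hupper := (mul_le_mul_of_nonpos_left hD1 ha.le).trans h
    have hprod :
        0 ≤ S ^ 2 * (S - n) * (4 * S ^ 2 + (7 * n + 18) * S - 26 * n ^ 2 - 18 * n) := by
      linarith
    exact nonneg_of_mul_nonneg_right hprod hpos

lemma le_of_quadratic_nonneg {n S : ℝ} (hn : 0 ≤ n) (hS : 0 < S)
    (h : 0 ≤ 4 * S ^ 2 + (7 * n + 18) * S - 26 * n ^ 2 - 18 * n) :
    (√465 - 7) / 8 * n - 9 / 4 * (1 - √465 / 31) ≤ S := by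
  set T := (√465 - 7) / 8 * n - 9 / 4 * (1 - √465 / 31)
  have hroot : 4 * T ^ 2 + (7 * n + 18) * T = 26 * n ^ 2 + 18 * n - 324 / 31 := by
    linear_combination
      (4 * (n / 8 + 9 / 124) ^ 2) * Real.sq_sqrt (show (0 : ℝ) ≤ 465 by norm_num)
  by_contra! hlt
  nlinarith [mul_pos (sub_pos.2 hlt) (show 0 < 4 * (S + T) + 7 * n + 18 by linarith)]

theorem stmt_1 (n : ℕ) (hn : 5 ≤ n) (S : ℝ) (hS : (n : ℝ) < S)
    (t : ℝ) (ht : t = (S - n) / S)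
    (D : ℝ) (hD0 : 0 ≤ D) (hD1 : D ≤ 2 / 3 * t * S ^ 3)
    (h1 : t * S ^ 2 * (S - 2 * n) ≥
      (4 * t ^ 2 - 9 * t + 3) / (3 * (1 - t)) * D - 2 * t ^ 2 * S ^ 2 / (1 - t)) :
    S ≥ (Real.sqrt 465 - 7) / 8 * n - 9 / 4 * (1 - Real.sqrt 465 / 31) := by
  have hn' : (5 : ℝ) ≤ n := by exact_mod_cast hn
  have hS0 : 0 < S := by linarith
  have hD1' : D ≤ 2 / 3 * (S - n) * S ^ 2 := by
    convert hD1 using 1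
    rw [ht]
    field_simp
  exact le_of_quadratic_nonneg (by linarith) hS0 <|
    quadratic_nonneg_of_cleared hn' hS hD0 hD1' (cleared_of_le_sub (by linarith) hS ht h1)
end

section
/- Let n ≥ 5 be a natural number and S a real number with S > n; set t = (S − n)/S. Let D ≥ 0 be a real number and assume t·S²·(S − 2n) ≥ ((4t² − 9t + 3)/(3(1 − t)))·D − 2t²S²/(1 − t). Then t > (9 − √33)/8. -/
theorem stmt_2 (n : ℕ) (hn : 5 ≤ n) (S : ℝ) (hS : (n : ℝ) < S)
    (t : ℝ) (ht : t = (S - n) / S)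
    (D : ℝ) (hD0 : 0 ≤ D)
    (h1 : t * S ^ 2 * (S - 2 * n) ≥
      (4 * t ^ 2 - 9 * t + 3) / (3 * (1 - t)) * D - 2 * t ^ 2 * S ^ 2 / (1 - t)) :
    t > (9 - Real.sqrt 33) / 8 := by
  set s := Real.sqrt 33 with hsdef
  have hs2 : s ^ 2 = 33 := Real.sq_sqrt (by norm_num)
  have hs0 : 0 ≤ s := Real.sqrt_nonneg 33
  have hn5 : (5:ℝ) ≤ (n:ℝ) := by exact_mod_cast hn
  have hS0 : (0:ℝ) < S := lt_trans (by linarith) hS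
  have htS : t * S = S - n := by
    rw [ht]; field_simp
  have h1t : (1 - t) * S = n := by nlinarith
  have h1tpos : 0 < 1 - t := by
    have := h1t
    nlinarith
  by_contra hle
  push_neg at hle
  -- t ≤ (9 - s)/8
  have hquad : 0 ≤ 4 * t ^ 2 - 9 * t + 3 := by
    nlinarith [mul_nonneg (sub_nonneg.2 hle) (by nlinarith : (0:ℝ) ≤ (9 + s)/8 - t)]
  have hDterm : 0 ≤ (4 * t ^ 2 - 9 * t + 3) / (3 * (1 - t)) * D :=
    mul_nonneg (div_nonneg hquad (by linarith)) hD0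
  have h2 : t * S ^ 2 * (S - 2 * n) ≥ - (2 * t ^ 2 * S ^ 2 / (1 - t)) := by linarith
  have h3 : t * S ^ 2 * (S - 2 * n) * (1 - t) ≥ - (2 * t ^ 2 * S ^ 2) := by
    have := mul_le_mul_of_nonneg_right h2 (le_of_lt h1tpos)
    calc - (2 * t ^ 2 * S ^ 2) = - (2 * t ^ 2 * S ^ 2 / (1 - t)) * (1 - t) := by
          field_simp
      _ ≤ t * S ^ 2 * (S - 2 * n) * (1 - t) := this
  -- rewrite in terms of S, n : n(S−n)(S−2n) + 2(S−n)² ≥ 0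
  have e1 : t * S ^ 2 * (S - 2 * n) * (1 - t) = (n:ℝ) * (S - n) * (S - 2 * n) := by
    linear_combination (S - 2*(n:ℝ)) * ((1-t)*S) * htS + (S - 2*(n:ℝ)) * (S - (n:ℝ)) * h1t
  have e2 : t ^ 2 * S ^ 2 = (S - (n:ℝ)) ^ 2 := by
    linear_combination (t*S + (S - (n:ℝ))) * htS
  have h4 : (n:ℝ) * (S - n) * (S - 2 * n) + 2 * (S - n) ^ 2 ≥ 0 := by
    rw [e1] at h3; linarith [e2]
  have hSn : 0 < S - (n:ℝ) := by linarith
  have h5 : S * ((n:ℝ) + 2) ≥ 2 * n ^ 2 + 2 * n := by nlinarith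
  -- now t = (S−n)/S ≥ n/(2(n+1)) ≥ 5/12 > (9−s)/8
  have ht5 : t ≥ (n:ℝ) / (2 * (n + 1)) := by
    rw [ht, ge_iff_le, div_le_div_iff₀ (by positivity) hS0]
    nlinarith
  have h512 : (n:ℝ) / (2 * (n + 1)) ≥ 5 / 12 := by
    rw [ge_iff_le, div_le_div_iff₀ (by norm_num) (by positivity)]
    linarith
  -- (9 - s)/8 < 5/12 since s > 17/3
  have hsgt : s > 17 / 3 := by
    rw [hsdef]; exact (Real.lt_sqrt (by norm_num)).2 (by norm_num)
  linarith
end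

section
/- Define a sequence of real numbers by a₁ = 2 and a_{k+1} = 1 + 2·( (0.452115/(36·(1 − 0.452115)))·a_k + 1/24 )^{1/3} for k ≥ 1, where (·)^{1/3} is the real cube root. Then a₇ ≤ 1.878415. -/
lemma cbrt_le' {x r : ℝ} (hx : 0 ≤ x) (hr : 0 ≤ r) (h : x ≤ r ^ 3) :
    x ^ ((1 : ℝ) / 3) ≤ r := by
  have h1 : x ^ ((1 : ℝ) / 3) ≤ (r ^ 3) ^ ((1 : ℝ) / 3) :=
    Real.rpow_le_rpow hx h (by norm_num)
  have h2 : (r ^ 3 : ℝ) ^ ((1 : ℝ) / 3) = r := by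
    rw [← Real.rpow_natCast r 3, ← Real.rpow_mul hr]
    norm_num
  linarith

theorem stmt_5 (a : ℕ → ℝ) (h1 : a 1 = 2)
    (hrec : ∀ k : ℕ, 1 ≤ k →
      a (k + 1) = 1 + 2 * ((0.452115 / (36 * (1 - 0.452115))) * a k + 1 / 24) ^ ((1 : ℝ) / 3)) :
    a 7 ≤ 1.878415 := by
  set c : ℝ := 0.452115 / (36 * (1 - 0.452115)) with hc
  have hcpos : (0 : ℝ) < c := by rw [hc]; norm_num
  have step : ∀ k : ℕ, 1 ≤ k → ∀ b r : ℝ, 0 ≤ a k → a k ≤ b → 0 ≤ r →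
      c * b + 1 / 24 ≤ r ^ 3 → 0 ≤ a (k + 1) ∧ a (k + 1) ≤ 1 + 2 * r := by
    intro k hk b r h0 hb hr hcube
    have hx : (0 : ℝ) ≤ c * a k + 1 / 24 := by positivity
    have hle : c * a k + 1 / 24 ≤ r ^ 3 := by nlinarith
    have := cbrt_le' hx hr hle
    have hnn : (0 : ℝ) ≤ (c * a k + 1 / 24) ^ ((1 : ℝ) / 3) := Real.rpow_nonneg hx _
    rw [hrec k hk]
    constructor <;> linarith
  have s1 := step 1 (by norm_num) 2 (44397087 / 100000000) (by linarith) (by linarith)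
    (by norm_num) (by rw [hc]; norm_num)
  have s2 := step 2 (by norm_num) (1 + 2 * (44397087 / 100000000)) (43958386 / 100000000)
    s1.1 s1.2 (by norm_num) (by rw [hc]; norm_num)
  have s3 := step 3 (by norm_num) (1 + 2 * (43958386 / 100000000)) (43923665 / 100000000)
    s2.1 s2.2 (by norm_num) (by rw [hc]; norm_num)
  have s4 := step 4 (by norm_num) (1 + 2 * (43923665 / 100000000)) (43920914 / 100000000)
    s3.1 s3.2 (by norm_num) (by rw [hc]; norm_num)
  have s5 := step 5 (by norm_num) (1 + 2 * (43920914 / 100000000)) (43920696 / 100000000)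
    s4.1 s4.2 (by norm_num) (by rw [hc]; norm_num)
  have s6 := step 6 (by norm_num) (1 + 2 * (43920696 / 100000000)) (43920679 / 100000000)
    s5.1 s5.2 (by norm_num) (by rw [hc]; norm_num)
  calc a 7 ≤ 1 + 2 * (43920679 / 100000000) := s6.2
    _ ≤ 1.878415 := by norm_num
end

section
/- Let n ≥ 1, λ : Fin n → ℝ, and let h : Fin n → Fin n → Fin n → ℝ be totally symmetric (h i j k is invariant under all permutations of (i,j,k)). Set A = Σ_{i,j,k} λ_i² (h i j k)², B = Σ_{i,j,k} λ_i λ_j (h i j k)², C = Σ_{i,j,k} λ_i (h i j k)², and T = Σ_{i,j,k} (h i j k)². Then C² ≤ (1/3)·(A + 2B)·T. -/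
theorem stmt_8 (n : ℕ) (hn : 1 ≤ n) (lam : Fin n → ℝ)
    (h : Fin n → Fin n → Fin n → ℝ)
    (hsym1 : ∀ i j k, h i j k = h j i k)
    (hsym2 : ∀ i j k, h i j k = h i k j)
    (A B C T : ℝ)
    (hA : A = ∑ i, ∑ j, ∑ k, lam i ^ 2 * (h i j k) ^ 2)
    (hB : B = ∑ i, ∑ j, ∑ k, lam i * lam j * (h i j k) ^ 2)
    (hC : C = ∑ i, ∑ j, ∑ k, lam i * (h i j k) ^ 2)
    (hT : T = ∑ i, ∑ j, ∑ k, (h i j k) ^ 2) :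
    C ^ 2 ≤ (1 / 3) * (A + 2 * B) * T := by
  have p12 : ∀ g : Fin n → Fin n → Fin n → ℝ,
      (∑ i, ∑ j, ∑ k, g j i k * (h i j k) ^ 2) = ∑ i, ∑ j, ∑ k, g i j k * (h i j k) ^ 2 := by
    intro g
    rw [Finset.sum_comm]
    exact Finset.sum_congr rfl fun i _ => Finset.sum_congr rfl fun j _ =>
      Finset.sum_congr rfl fun k _ => by rw [hsym1 j i k]
  have p23 : ∀ g : Fin n → Fin n → Fin n → ℝ,
      (∑ i, ∑ j, ∑ k, g i k j * (h i j k) ^ 2) = ∑ i, ∑ j, ∑ k, g i j k * (h i j k) ^ 2 := by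
    intro g
    refine Finset.sum_congr rfl fun i _ => ?_
    rw [Finset.sum_comm]
    exact Finset.sum_congr rfl fun j _ =>
      Finset.sum_congr rfl fun k _ => by rw [hsym2 i j k]
  have eC2 : (∑ i, ∑ j, ∑ k, lam j * (h i j k) ^ 2) = C := by
    rw [p12 (fun a _ _ => lam a), ← hC]
  have eC3 : (∑ i, ∑ j, ∑ k, lam k * (h i j k) ^ 2) = C := by
    rw [p23 (fun _ b _ => lam b), eC2]
  have eA2 : (∑ i, ∑ j, ∑ k, lam j ^ 2 * (h i j k) ^ 2) = A := by
    rw [p12 (fun a _ _ => lam a ^ 2), ← hA]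
  have eA3 : (∑ i, ∑ j, ∑ k, lam k ^ 2 * (h i j k) ^ 2) = A := by
    rw [p23 (fun _ b _ => lam b ^ 2), eA2]
  have eB13 : (∑ i, ∑ j, ∑ k, lam i * lam k * (h i j k) ^ 2) = B := by
    rw [p23 (fun a b _ => lam a * lam b), ← hB]
  have eB23 : (∑ i, ∑ j, ∑ k, lam j * lam k * (h i j k) ^ 2) = B := by
    rw [p12 (fun a _ c => lam a * lam c), eB13]
  have cs := Finset.sum_mul_sq_le_sq_mul_sq Finset.univ
    (fun p : Fin n × Fin n × Fin n => (lam p.1 + lam p.2.1 + lam p.2.2) * h p.1 p.2.1 p.2.2)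
    (fun p : Fin n × Fin n × Fin n => h p.1 p.2.1 p.2.2)
  have hfg : (∑ p : Fin n × Fin n × Fin n,
      ((lam p.1 + lam p.2.1 + lam p.2.2) * h p.1 p.2.1 p.2.2) * h p.1 p.2.1 p.2.2) = 3 * C := by
    simp_rw [Fintype.sum_prod_type]
    have e : ∀ i j k : Fin n, ((lam i + lam j + lam k) * h i j k) * h i j k
        = lam i * (h i j k) ^ 2 + lam j * (h i j k) ^ 2 + lam k * (h i j k) ^ 2 := by
      intros; ring
    simp_rw [e, Finset.sum_add_distrib]
    rw [eC2, eC3, ← hC]; ring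
  have hff : (∑ p : Fin n × Fin n × Fin n,
      ((lam p.1 + lam p.2.1 + lam p.2.2) * h p.1 p.2.1 p.2.2) ^ 2) = 3 * A + 6 * B := by
    simp_rw [Fintype.sum_prod_type]
    have e : ∀ i j k : Fin n, ((lam i + lam j + lam k) * h i j k) ^ 2
        = lam i ^ 2 * (h i j k) ^ 2 + lam j ^ 2 * (h i j k) ^ 2 + lam k ^ 2 * (h i j k) ^ 2
          + lam i * lam j * (h i j k) ^ 2 + lam i * lam j * (h i j k) ^ 2
          + lam i * lam k * (h i j k) ^ 2 + lam i * lam k * (h i j k) ^ 2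
          + lam j * lam k * (h i j k) ^ 2 + lam j * lam k * (h i j k) ^ 2 := by
      intros; ring
    simp_rw [e, Finset.sum_add_distrib]
    rw [eA2, eA3, eB13, eB23, ← hA, ← hB]; ring
  have hgg : (∑ p : Fin n × Fin n × Fin n, (h p.1 p.2.1 p.2.2) ^ 2) = T := by
    simp_rw [Fintype.sum_prod_type]; rw [← hT]
  rw [hfg, hff, hgg] at cs
  nlinarith [cs]
end

section
/- Let n ≥ 1, λ : Fin n → ℝ, and let h : Fin n → Fin n → Fin n → ℝ be totally symmetric (h i j k is invariant under all permutations of (i,j,k)). Set A = Σ_{i,j,k} λ_i² (h i j k)², B = Σ_{i,j,k} λ_i λ_j (h i j k)², T = Σ_{i,j,k} (h i j k)², and let λmax and λmin be the maximum and minimum values of λ. Then A − B ≤ (1/3)·(λmax − λmin)²·T. -/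
lemma key_ineq (m M a b c : ℝ) (ha1 : m ≤ a) (ha2 : a ≤ M) (hb1 : m ≤ b) (hb2 : b ≤ M)
    (hc1 : m ≤ c) (hc2 : c ≤ M) :
    (a - b) ^ 2 + (b - c) ^ 2 + (c - a) ^ 2 ≤ 2 * (M - m) ^ 2 := by
  have hx : (a - b) ^ 2 ≤ (M - m) ^ 2 := by nlinarith
  have hy : (b - c) ^ 2 ≤ (M - m) ^ 2 := by nlinarith
  have hz : (a - c) ^ 2 ≤ (M - m) ^ 2 := by nlinarith
  rcases le_total ((a - b) * (b - c)) 0 with hs | hs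
  · rcases le_total ((a - b) ^ 2) ((b - c) ^ 2) with h2 | h2 <;> nlinarith
  · nlinarith

lemma tri_rot {n : ℕ} (f : Fin n → Fin n → Fin n → ℝ) :
    (∑ i, ∑ j, ∑ k, f i j k) = ∑ j, ∑ k, ∑ i, f i j k := by
  rw [Finset.sum_comm]
  exact Finset.sum_congr rfl fun j _ => by rw [Finset.sum_comm]

theorem stmt_9 (n : ℕ) (hn : 1 ≤ n) (lam : Fin n → ℝ)
    (h : Fin n → Fin n → Fin n → ℝ)
    (hsym1 : ∀ i j k, h i j k = h j i k)
    (hsym2 : ∀ i j k, h i j k = h i k j)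
    (A B T lmax lmin : ℝ)
    (hA : A = ∑ i, ∑ j, ∑ k, lam i ^ 2 * (h i j k) ^ 2)
    (hB : B = ∑ i, ∑ j, ∑ k, lam i * lam j * (h i j k) ^ 2)
    (hT : T = ∑ i, ∑ j, ∑ k, (h i j k) ^ 2)
    (hmax : IsGreatest (Set.range lam) lmax)
    (hmin : IsLeast (Set.range lam) lmin) :
    A - B ≤ (1 / 3) * (lmax - lmin) ^ 2 * T := by
  have hub : ∀ i, lam i ≤ lmax := fun i => hmax.2 ⟨i, rfl⟩
  have hlb : ∀ i, lmin ≤ lam i := fun i => hmin.2 ⟨i, rfl⟩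
  have hAj : (∑ i, ∑ j, ∑ k, lam j ^ 2 * (h i j k) ^ 2) = A := by
    rw [hA, Finset.sum_comm]
    exact Finset.sum_congr rfl fun j _ => Finset.sum_congr rfl fun i _ =>
      Finset.sum_congr rfl fun k _ => by rw [hsym1 i j k]
  have S1 : (∑ i, ∑ j, ∑ k, (lam i - lam j) ^ 2 * (h i j k) ^ 2) = 2 * (A - B) := by
    have e : (∑ i, ∑ j, ∑ k, (lam i - lam j) ^ 2 * (h i j k) ^ 2)
        = (∑ i, ∑ j, ∑ k, lam i ^ 2 * (h i j k) ^ 2)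
          - 2 * (∑ i, ∑ j, ∑ k, lam i * lam j * (h i j k) ^ 2)
          + (∑ i, ∑ j, ∑ k, lam j ^ 2 * (h i j k) ^ 2) := by
      simp only [Finset.mul_sum, ← Finset.sum_add_distrib, ← Finset.sum_sub_distrib]
      exact Finset.sum_congr rfl fun i _ => Finset.sum_congr rfl fun j _ =>
        Finset.sum_congr rfl fun k _ => by ring
    rw [e, hAj, ← hA, ← hB]; ring
  have S2 : (∑ i, ∑ j, ∑ k, (lam j - lam k) ^ 2 * (h i j k) ^ 2) = 2 * (A - B) := by
    rw [tri_rot (fun i j k => (lam j - lam k) ^ 2 * (h i j k) ^ 2), ← S1]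
    exact Finset.sum_congr rfl fun a _ => Finset.sum_congr rfl fun b _ =>
      Finset.sum_congr rfl fun c _ => by rw [hsym1 c a b, hsym2 a c b]
  have S3 : (∑ i, ∑ j, ∑ k, (lam k - lam i) ^ 2 * (h i j k) ^ 2) = 2 * (A - B) := by
    rw [tri_rot (fun i j k => (lam k - lam i) ^ 2 * (h i j k) ^ 2), ← S2]
    exact Finset.sum_congr rfl fun a _ => Finset.sum_congr rfl fun b _ =>
      Finset.sum_congr rfl fun c _ => by
        rw [hsym1 c a b, hsym2 a c b]
  have hbound : (∑ i, ∑ j, ∑ k, ((lam i - lam j) ^ 2 + (lam j - lam k) ^ 2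
      + (lam k - lam i) ^ 2) * (h i j k) ^ 2)
      ≤ ∑ i, ∑ j, ∑ k, 2 * (lmax - lmin) ^ 2 * (h i j k) ^ 2 := by
    refine Finset.sum_le_sum fun i _ => Finset.sum_le_sum fun j _ =>
      Finset.sum_le_sum fun k _ => ?_
    exact mul_le_mul_of_nonneg_right
      (key_ineq lmin lmax _ _ _ (hlb i) (hub i) (hlb j) (hub j) (hlb k) (hub k))
      (sq_nonneg _)
  have hsplit : (∑ i, ∑ j, ∑ k, ((lam i - lam j) ^ 2 + (lam j - lam k) ^ 2
      + (lam k - lam i) ^ 2) * (h i j k) ^ 2) = 6 * (A - B) := by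
    have e : (∑ i, ∑ j, ∑ k, ((lam i - lam j) ^ 2 + (lam j - lam k) ^ 2
        + (lam k - lam i) ^ 2) * (h i j k) ^ 2)
        = (∑ i, ∑ j, ∑ k, (lam i - lam j) ^ 2 * (h i j k) ^ 2)
          + (∑ i, ∑ j, ∑ k, (lam j - lam k) ^ 2 * (h i j k) ^ 2)
          + (∑ i, ∑ j, ∑ k, (lam k - lam i) ^ 2 * (h i j k) ^ 2) := by
      simp only [← Finset.sum_add_distrib]
      exact Finset.sum_congr rfl fun i _ => Finset.sum_congr rfl fun j _ =>
        Finset.sum_congr rfl fun k _ => by ring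
    rw [e, S1, S2, S3]; ring
  have hrhs : (∑ i, ∑ j, ∑ k, 2 * (lmax - lmin) ^ 2 * (h i j k) ^ 2)
      = 2 * (lmax - lmin) ^ 2 * T := by
    rw [hT]; simp [Finset.mul_sum]
  rw [hsplit, hrhs] at hbound
  linarith
end

section
/- Let n ≥ 1, λ : Fin n → ℝ with Σ_i λ_i = 0, and let h : Fin n → Fin n → Fin n → ℝ be totally symmetric (h i j k is invariant under all permutations of (i,j,k)). Set S = Σ_i λ_i², A = Σ_{i,j,k} λ_i² (h i j k)², B = Σ_{i,j,k} λ_i λ_j (h i j k)², T = Σ_{i,j,k} (h i j k)². Then A − B ≤ (2/3)·S·T. -/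
theorem stmt_11 (n : ℕ) (hn : 1 ≤ n) (lam : Fin n → ℝ)
    (htr : ∑ i, lam i = 0)
    (h : Fin n → Fin n → Fin n → ℝ)
    (hsym1 : ∀ i j k, h i j k = h j i k)
    (hsym2 : ∀ i j k, h i j k = h i k j)
    (S A B T : ℝ)
    (hS : S = ∑ i, lam i ^ 2)
    (hA : A = ∑ i, ∑ j, ∑ k, lam i ^ 2 * (h i j k) ^ 2)
    (hB : B = ∑ i, ∑ j, ∑ k, lam i * lam j * (h i j k) ^ 2)
    (hT : T = ∑ i, ∑ j, ∑ k, (h i j k) ^ 2) :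
    A - B ≤ (2 / 3) * S * T := by
  -- alternative symmetrized forms of A
  have hAj : A = ∑ i, ∑ j, ∑ k, lam j ^ 2 * (h i j k) ^ 2 := by
    rw [hA, Finset.sum_comm]
    refine Finset.sum_congr rfl fun i _ => Finset.sum_congr rfl fun j _ =>
      Finset.sum_congr rfl fun k _ => ?_
    rw [hsym1 j i k]
  have hAk : A = ∑ i, ∑ j, ∑ k, lam k ^ 2 * (h i j k) ^ 2 := by
    rw [hAj]
    refine Finset.sum_congr rfl fun i _ => ?_
    rw [Finset.sum_comm]
    refine Finset.sum_congr rfl fun j _ => Finset.sum_congr rfl fun k _ => ?_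
    rw [hsym2 i k j]
  -- alternative symmetrized forms of B
  have hBik : B = ∑ i, ∑ j, ∑ k, lam i * lam k * (h i j k) ^ 2 := by
    rw [hB]
    refine Finset.sum_congr rfl fun i _ => ?_
    rw [Finset.sum_comm]
    refine Finset.sum_congr rfl fun j _ => Finset.sum_congr rfl fun k _ => ?_
    rw [hsym2 i k j]
  have hBjk : B = ∑ i, ∑ j, ∑ k, lam j * lam k * (h i j k) ^ 2 := by
    rw [hBik, Finset.sum_comm]
    refine Finset.sum_congr rfl fun i _ => Finset.sum_congr rfl fun j _ =>
      Finset.sum_congr rfl fun k _ => ?_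
    rw [hsym1 j i k]
  -- sums of squares over subsets are bounded by S
  have subset_sum : ∀ s : Finset (Fin n), ∑ x ∈ s, lam x ^ 2 ≤ S := by
    intro s
    rw [hS]
    exact Finset.sum_le_sum_of_subset_of_nonneg (Finset.subset_univ s)
      (fun x _ _ => sq_nonneg _)
  have hSnn : 0 ≤ S := by
    have := subset_sum ∅
    simpa using this.trans_eq rfl |>.trans_eq rfl |> fun _ => by
      have h0 : (0:ℝ) = ∑ x ∈ (∅ : Finset (Fin n)), lam x ^ 2 := by simp
      rw [h0]; exact subset_sum ∅
  have pair : ∀ i j : Fin n, i ≠ j → lam i ^ 2 + lam j ^ 2 ≤ S := by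
    intro i j hij
    have := subset_sum {i, j}
    rwa [Finset.sum_pair hij] at this
  have triple : ∀ i j k : Fin n, i ≠ j → j ≠ k → i ≠ k →
      lam i ^ 2 + lam j ^ 2 + lam k ^ 2 ≤ S := by
    intro i j k hij hjk hik
    have := subset_sum {i, j, k}
    rwa [Finset.sum_insert (by simp [hij, hik]), Finset.sum_pair hjk, ← add_assoc] at this
  -- pointwise bound
  have pt : ∀ i j k : Fin n,
      (lam i - lam j) ^ 2 + (lam j - lam k) ^ 2 + (lam i - lam k) ^ 2 ≤ 4 * S := by
    intro i j k
    by_cases hij : i = j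
    · subst hij
      by_cases hik : i = k
      · subst hik; simpa using by nlinarith [hSnn]
      · have := pair i k hik
        nlinarith [sq_nonneg (lam i + lam k)]
    · by_cases hjk : j = k
      · subst hjk
        have := pair i j hij
        nlinarith [sq_nonneg (lam i + lam j)]
      · by_cases hik : i = k
        · subst hik
          have := pair i j hij
          nlinarith [sq_nonneg (lam i + lam j)]
        · have := triple i j k hij hjk hik
          nlinarith [sq_nonneg (lam i + lam j + lam k)]
  -- assemble: 6*(A - B) equals the symmetrized sum
  have e : 6 * (A - B)
      = ∑ i, ∑ j, ∑ k,
        ((lam i - lam j) ^ 2 + (lam j - lam k) ^ 2 + (lam i - lam k) ^ 2)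
          * (h i j k) ^ 2 := by
    have e1 : 6 * (A - B)
        = 2 * (∑ i, ∑ j, ∑ k, lam i ^ 2 * (h i j k) ^ 2)
        + 2 * (∑ i, ∑ j, ∑ k, lam j ^ 2 * (h i j k) ^ 2)
        + 2 * (∑ i, ∑ j, ∑ k, lam k ^ 2 * (h i j k) ^ 2)
        - 2 * (∑ i, ∑ j, ∑ k, lam i * lam j * (h i j k) ^ 2)
        - 2 * (∑ i, ∑ j, ∑ k, lam j * lam k * (h i j k) ^ 2)
        - 2 * (∑ i, ∑ j, ∑ k, lam i * lam k * (h i j k) ^ 2) := by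
      rw [← hA, ← hAj, ← hAk, ← hB, ← hBjk, ← hBik]; ring
    rw [e1]
    simp only [Finset.mul_sum, ← Finset.sum_add_distrib, ← Finset.sum_sub_distrib]
    refine Finset.sum_congr rfl fun i _ => Finset.sum_congr rfl fun j _ =>
      Finset.sum_congr rfl fun k _ => ?_
    ring
  have bound : (∑ i, ∑ j, ∑ k,
        ((lam i - lam j) ^ 2 + (lam j - lam k) ^ 2 + (lam i - lam k) ^ 2)
          * (h i j k) ^ 2) ≤ 4 * S * T := by
    have : (∑ i, ∑ j, ∑ k,
        ((lam i - lam j) ^ 2 + (lam j - lam k) ^ 2 + (lam i - lam k) ^ 2)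
          * (h i j k) ^ 2) ≤ ∑ i, ∑ j, ∑ k, (4 * S) * (h i j k) ^ 2 := by
      refine Finset.sum_le_sum fun i _ => Finset.sum_le_sum fun j _ =>
        Finset.sum_le_sum fun k _ => ?_
      exact mul_le_mul_of_nonneg_right (pt i j k) (sq_nonneg _)
    calc _ ≤ ∑ i, ∑ j, ∑ k, (4 * S) * (h i j k) ^ 2 := this
      _ = 4 * S * T := by rw [hT]; simp [Finset.mul_sum]
  linarith
end

section
/- Let n ≥ 3 and λ : Fin n → ℝ, and set S = Σ_i λ_i², f₃ = Σ_i λ_i³, f₄ = Σ_i λ_i⁴. Then for any pairwise distinct indices i, j, k one has −(λ_iλ_j + λ_iλ_k + λ_jλ_k) ≤ (S·f₄ − f₃²)^{1/3}, where (·)^{1/3} is the real cube root. -/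
lemma stmt13_rhs_nonneg (a b c : ℝ) :
    0 ≤ (a^2+b^2+c^2)*(a^4+b^4+c^4) - (a^3+b^3+c^3)^2 := by
  nlinarith [sq_nonneg ((a-b)*a*b), sq_nonneg ((a-c)*a*c), sq_nonneg ((b-c)*b*c)]

lemma stmt13_cube_helper (u v : ℝ) (hu : 0 ≤ u) (hv : 0 ≤ v) : (u+v)^3 ≤ 4*u^3 + 4*v^3 := by
  nlinarith [mul_nonneg hu hv, sq_nonneg (u-v), mul_nonneg (mul_nonneg hu hv) (add_nonneg hu hv)]

lemma stmt13_step (P M R : ℝ) (hP : 0 ≤ P) (hPM : P ≤ M) (hMR : M^3 ≤ R) : P^3 ≤ R :=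
  le_trans (pow_le_pow_left₀ hP hPM 3) hMR

lemma stmt13_three_var_case (a b c : ℝ) (hbc : 0 ≤ b*c) :
    (-(a*b+a*c+b*c))^3 ≤ (a^2+b^2+c^2)*(a^4+b^4+c^4) - (a^3+b^3+c^3)^2 := by
  rcases le_or_gt (-(a*b+a*c+b*c)) 0 with hP | hP
  · exact le_trans (Odd.pow_nonpos (by decide) hP) (stmt13_rhs_nonneg a b c)
  rcases le_or_gt 0 (a*b) with hab | hab
  · rcases le_or_gt 0 (a*c) with hac | hac
    · linarith [stmt13_rhs_nonneg a b c,
        Odd.pow_nonpos (by decide : Odd 3) (show -(a*b+a*c+b*c) ≤ 0 by linarith)]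
    · refine stmt13_step _ (-(a*c)) _ hP.le (by linarith) ?_
      nlinarith [sq_nonneg ((a-b)*a*b), sq_nonneg ((b-c)*b*c), sq_nonneg (a*c),
        sq_nonneg ((a+c)*a*c), sq_nonneg (a*c*(a-c))]
  · rcases le_or_gt 0 (a*c) with hac | hac
    · refine stmt13_step _ (-(a*b)) _ hP.le (by linarith) ?_
      nlinarith [sq_nonneg ((a-c)*a*c), sq_nonneg ((b-c)*b*c), sq_nonneg (a*b),
        sq_nonneg ((a+b)*a*b), sq_nonneg (a*b*(a-b))]
    · refine stmt13_step _ (-(a*b) + -(a*c)) _ hP.le (by linarith) ?_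
      have h1 := stmt13_cube_helper (-(a*b)) (-(a*c)) (by linarith) (by linarith)
      have h2 : 4*(-(a*b))^3 ≤ (a-b)^2*(a*b)^2 := by nlinarith [sq_nonneg (a+b), sq_nonneg (a*b)]
      have h3 : 4*(-(a*c))^3 ≤ (a-c)^2*(a*c)^2 := by nlinarith [sq_nonneg (a+c), sq_nonneg (a*c)]
      nlinarith [sq_nonneg ((b-c)*b*c)]

lemma stmt13_three_var (a b c : ℝ) :
    (-(a*b+a*c+b*c))^3 ≤ (a^2+b^2+c^2)*(a^4+b^4+c^4) - (a^3+b^3+c^3)^2 := by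
  rcases le_or_gt 0 (b*c) with h | h1
  · exact stmt13_three_var_case a b c h
  rcases le_or_gt 0 (a*c) with h | h2
  · have := stmt13_three_var_case b a c h
    calc (-(a*b+a*c+b*c))^3 = (-(b*a+b*c+a*c))^3 := by ring
      _ ≤ _ := by nlinarith [this]
  · have h3 : 0 ≤ a*b := by nlinarith [mul_pos (neg_pos.2 h1) (neg_pos.2 h2), sq_nonneg c]
    have := stmt13_three_var_case c a b h3
    calc (-(a*b+a*c+b*c))^3 = (-(c*a+c*b+a*b))^3 := by ring
      _ ≤ _ := by nlinarith [this]

lemma stmt13_main (a b c A B C D : ℝ) (hA0 : 0 ≤ A) (hC0 : 0 ≤ C) (hB2 : B^2 ≤ A*C)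
    (hD : D = ((a^2+b^2+c^2)+A) * ((a^4+b^4+c^4)+C) - ((a^3+b^3+c^3)+B)^2) :
    -(a*b + a*c + b*c) ≤ D ^ ((1:ℝ)/3) := by
  have hs0 : (0:ℝ) ≤ a^2+b^2+c^2 := by positivity
  have hq0 : (0:ℝ) ≤ a^4+b^4+c^4 := by positivity
  have hc2 : (a^3+b^3+c^3)^2 ≤ (a^2+b^2+c^2)*(a^4+b^4+c^4) := by
    nlinarith [stmt13_rhs_nonneg a b c]
  have hcross : 2*((a^3+b^3+c^3)*B) ≤ (a^2+b^2+c^2)*C + A*(a^4+b^4+c^4) := by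
    have h1 : (a^3+b^3+c^3)^2 * B^2 ≤ ((a^2+b^2+c^2)*(a^4+b^4+c^4))*(A*C) :=
      mul_le_mul hc2 hB2 (sq_nonneg B) (mul_nonneg hs0 hq0)
    nlinarith [h1, sq_nonneg ((a^2+b^2+c^2)*C - A*(a^4+b^4+c^4)),
      add_nonneg (mul_nonneg hs0 hC0) (mul_nonneg hA0 hq0)]
  have hD3 : (a^2+b^2+c^2)*(a^4+b^4+c^4) - (a^3+b^3+c^3)^2 ≤ D := by
    rw [hD]; nlinarith [hB2, hcross]
  have hD0 : 0 ≤ D := le_trans (stmt13_rhs_nonneg a b c) hD3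
  rcases le_or_gt (-(a*b + a*c + b*c)) 0 with hP | hP
  · exact le_trans hP (Real.rpow_nonneg hD0 _)
  have hP3 : (-(a*b + a*c + b*c))^3 ≤ D := le_trans (stmt13_three_var a b c) hD3
  calc -(a*b + a*c + b*c) = ((-(a*b + a*c + b*c))^3) ^ (((3:ℕ):ℝ)⁻¹) :=
        (Real.pow_rpow_inv_natCast hP.le (by norm_num)).symm
    _ ≤ D ^ (((3:ℕ):ℝ)⁻¹) := Real.rpow_le_rpow (pow_nonneg hP.le 3) hP3 (by norm_num)
    _ = D ^ ((1:ℝ)/3) := by norm_num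

theorem stmt_13 (n : ℕ) (hn : 3 ≤ n) (lam : Fin n → ℝ)
    (S f3 f4 : ℝ)
    (hS : S = ∑ i, lam i ^ 2) (hf3 : f3 = ∑ i, lam i ^ 3) (hf4 : f4 = ∑ i, lam i ^ 4)
    (i j k : Fin n) (hij : i ≠ j) (hik : i ≠ k) (hjk : j ≠ k) :
    -(lam i * lam j + lam i * lam k + lam j * lam k) ≤
      (S * f4 - f3 ^ 2) ^ ((1 : ℝ) / 3) := by
  have hsplit : ∀ m : ℕ, ∑ x, lam x ^ m
      = lam i ^ m + lam j ^ m + lam k ^ m + ∑ x ∈ ({i, j, k} : Finset (Fin n))ᶜ, lam x ^ m := by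
    intro m
    rw [← Finset.sum_add_sum_compl ({i, j, k} : Finset (Fin n))]
    congr 1
    rw [Finset.sum_insert (by simp [hij, hik]),
        Finset.sum_insert (by simp [hjk]), Finset.sum_singleton]
    ring
  have hA0 : 0 ≤ ∑ x ∈ ({i, j, k} : Finset (Fin n))ᶜ, lam x ^ 2 :=
    Finset.sum_nonneg fun x _ => by positivity
  have hC0 : 0 ≤ ∑ x ∈ ({i, j, k} : Finset (Fin n))ᶜ, lam x ^ 4 :=
    Finset.sum_nonneg fun x _ => by positivity
  have hB2 : (∑ x ∈ ({i, j, k} : Finset (Fin n))ᶜ, lam x ^ 3) ^ 2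
      ≤ (∑ x ∈ ({i, j, k} : Finset (Fin n))ᶜ, lam x ^ 2)
        * (∑ x ∈ ({i, j, k} : Finset (Fin n))ᶜ, lam x ^ 4) := by
    have h := Finset.sum_mul_sq_le_sq_mul_sq ({i, j, k} : Finset (Fin n))ᶜ lam
      (fun x => lam x ^ 2)
    calc (∑ x ∈ ({i, j, k} : Finset (Fin n))ᶜ, lam x ^ 3) ^ 2
        = (∑ x ∈ ({i, j, k} : Finset (Fin n))ᶜ, lam x * lam x ^ 2) ^ 2 := by
          congr 1; exact Finset.sum_congr rfl fun x _ => by ring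
      _ ≤ (∑ x ∈ ({i, j, k} : Finset (Fin n))ᶜ, lam x ^ 2)
          * (∑ x ∈ ({i, j, k} : Finset (Fin n))ᶜ, (lam x ^ 2) ^ 2) := h
      _ = _ := by congr 1; exact Finset.sum_congr rfl fun x _ => by ring
  exact stmt13_main (lam i) (lam j) (lam k) _ _ _ _ hA0 hC0 hB2
    (by rw [hS, hf3, hf4, hsplit 2, hsplit 3, hsplit 4])
end

section
/- Let n ≥ 2 and λ : Fin n → ℝ, and set S = Σ_i λ_i², f₃ = Σ_i λ_i³, f₄ = Σ_i λ_i⁴. Then for any distinct indices i ≠ j one has −2·λ_i·λ_j ≤ 2·((S·f₄ − f₃²)/4)^{1/3}, where (·)^{1/3} is the real cube root. -/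
theorem stmt_14 (n : ℕ) (hn : 2 ≤ n) (lam : Fin n → ℝ)
    (S f3 f4 : ℝ)
    (hS : S = ∑ i, lam i ^ 2) (hf3 : f3 = ∑ i, lam i ^ 3) (hf4 : f4 = ∑ i, lam i ^ 4)
    (i j : Fin n) (hij : i ≠ j) :
    -2 * lam i * lam j ≤ 2 * ((S * f4 - f3 ^ 2) / 4) ^ ((1 : ℝ) / 3) := by
  -- Lagrange-type identity
  have hid : ∑ p, ∑ q, (lam p - lam q) ^ 2 * lam p ^ 2 * lam q ^ 2
      = 2 * (S * f4 - f3 ^ 2) := by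
    subst hS hf3 hf4
    have : ∀ p q : Fin n, (lam p - lam q) ^ 2 * lam p ^ 2 * lam q ^ 2
        = lam p ^ 4 * lam q ^ 2 - 2 * (lam p ^ 3 * lam q ^ 3) + lam p ^ 2 * lam q ^ 4 := by
      intro p q; ring
    have e1 : ∑ p, ∑ q, lam p ^ 4 * lam q ^ 2 = (∑ p, lam p ^ 4) * (∑ q, lam q ^ 2) :=
      (Finset.sum_mul_sum _ _ _ _).symm
    have e2 : ∑ p, ∑ q, lam p ^ 3 * lam q ^ 3 = (∑ p, lam p ^ 3) * (∑ q, lam q ^ 3) :=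
      (Finset.sum_mul_sum _ _ _ _).symm
    have e3 : ∑ p, ∑ q, lam p ^ 2 * lam q ^ 4 = (∑ p, lam p ^ 2) * (∑ q, lam q ^ 4) :=
      (Finset.sum_mul_sum _ _ _ _).symm
    simp_rw [this, Finset.sum_add_distrib, Finset.sum_sub_distrib, ← Finset.mul_sum]
    simp_rw [← Finset.sum_mul]; ring
  -- lower bound the double sum by the (i,j) and (j,i) terms
  have hterm : 2 * ((lam i - lam j) ^ 2 * lam i ^ 2 * lam j ^ 2) ≤ 2 * (S * f4 - f3 ^ 2) := by
    rw [← hid, ← Finset.sum_product']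
    have hsub : ({(i, j), (j, i)} : Finset (Fin n × Fin n)) ⊆ Finset.univ ×ˢ Finset.univ := by
      intro x _; simp
    have hne : ((i, j) : Fin n × Fin n) ≠ (j, i) := by
      intro h; exact hij (congrArg Prod.fst h)
    calc 2 * ((lam i - lam j) ^ 2 * lam i ^ 2 * lam j ^ 2)
        = ∑ x ∈ ({(i, j), (j, i)} : Finset (Fin n × Fin n)),
            (lam x.1 - lam x.2) ^ 2 * lam x.1 ^ 2 * lam x.2 ^ 2 := by
          rw [Finset.sum_pair hne]; ring
      _ ≤ ∑ x ∈ Finset.univ ×ˢ Finset.univ,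
            (lam x.1 - lam x.2) ^ 2 * lam x.1 ^ 2 * lam x.2 ^ 2 := by
          apply Finset.sum_le_sum_of_subset_of_nonneg hsub
          intro x _ _
          positivity
  have hA : (lam i - lam j) ^ 2 * lam i ^ 2 * lam j ^ 2 ≤ S * f4 - f3 ^ 2 := by linarith
  have hA0 : 0 ≤ (S * f4 - f3 ^ 2) / 4 := by
    have h0 : 0 ≤ (lam i - lam j) ^ 2 * lam i ^ 2 * lam j ^ 2 := by positivity
    linarith
  set t : ℝ := -(lam i * lam j) with ht
  have hrpow0 : 0 ≤ ((S * f4 - f3 ^ 2) / 4) ^ ((1 : ℝ) / 3) := Real.rpow_nonneg hA0 _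
  rcases le_or_gt t 0 with htneg | htpos
  · nlinarith
  · have hcube : t ^ 3 ≤ (S * f4 - f3 ^ 2) / 4 := by
      nlinarith [sq_nonneg (lam i + lam j), sq_nonneg (lam i * lam j)]
    have : t ≤ ((S * f4 - f3 ^ 2) / 4) ^ ((1 : ℝ) / 3) := by
      have h1 : t = (t ^ 3) ^ ((1 : ℝ) / 3) := by
        rw [← Real.rpow_natCast t 3, ← Real.rpow_mul htpos.le]
        norm_num
      rw [h1]
      exact Real.rpow_le_rpow (by positivity) hcube (by norm_num)
    nlinarith
end

section
/- Let n ≥ 1, λ : Fin n → ℝ, and let h : Fin n → Fin n → Fin n → ℝ be totally symmetric (h i j k is invariant under all permutations of (i,j,k)). Set S = Σ_i λ_i², f₃ = Σ_i λ_i³, f₄ = Σ_i λ_i⁴, A = Σ_{i,j,k} λ_i² (h i j k)², B = Σ_{i,j,k} λ_i λ_j (h i j k)², T = Σ_{i,j,k} (h i j k)². Then 3·(A − B) ≤ (S + 2·((S·f₄ − f₃²)/4)^{1/3})·T, where (·)^{1/3} is the real cube root. -/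
set_option maxHeartbeats 1000000

private lemma sum3_swap12 {n : ℕ} (F : Fin n → Fin n → Fin n → ℝ) :
    ∑ i, ∑ j, ∑ k, F i j k = ∑ i, ∑ j, ∑ k, F j i k :=
  Finset.sum_comm

private lemma sum3_swap23 {n : ℕ} (F : Fin n → Fin n → Fin n → ℝ) :
    ∑ i, ∑ j, ∑ k, F i j k = ∑ i, ∑ j, ∑ k, F i k j :=
  Finset.sum_congr rfl fun _ _ => Finset.sum_comm

private lemma sum3_swap13 {n : ℕ} (F : Fin n → Fin n → Fin n → ℝ) :
    ∑ i, ∑ j, ∑ k, F i j k = ∑ i, ∑ j, ∑ k, F k j i := by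
  rw [sum3_swap12 F, sum3_swap23 (fun i j k => F j i k),
    sum3_swap12 (fun i j k => F k i j)]

private lemma sum3_cyc {n : ℕ} (F : Fin n → Fin n → Fin n → ℝ) :
    ∑ i, ∑ j, ∑ k, F i j k = ∑ i, ∑ j, ∑ k, F j k i := by
  rw [sum3_swap23 F, sum3_swap12 (fun i j k => F i k j)]

theorem stmt_15 (n : ℕ) (hn : 1 ≤ n) (lam : Fin n → ℝ)
    (h : Fin n → Fin n → Fin n → ℝ)
    (hsym1 : ∀ i j k, h i j k = h j i k)
    (hsym2 : ∀ i j k, h i j k = h i k j)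
    (S f3 f4 A B T : ℝ)
    (hS : S = ∑ i, lam i ^ 2) (hf3 : f3 = ∑ i, lam i ^ 3) (hf4 : f4 = ∑ i, lam i ^ 4)
    (hA : A = ∑ i, ∑ j, ∑ k, lam i ^ 2 * (h i j k) ^ 2)
    (hB : B = ∑ i, ∑ j, ∑ k, lam i * lam j * (h i j k) ^ 2)
    (hT : T = ∑ i, ∑ j, ∑ k, (h i j k) ^ 2) :
    3 * (A - B) ≤ (S + 2 * ((S * f4 - f3 ^ 2) / 4) ^ ((1 : ℝ) / 3)) * T := by
  -- Lagrange identity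
  have lag : S * f4 - f3 ^ 2
      = (1/2) * ∑ i, ∑ j, (lam i * lam j ^ 2 - lam j * lam i ^ 2) ^ 2 := by
    have expand : ∑ i, ∑ j, (lam i * lam j ^ 2 - lam j * lam i ^ 2) ^ 2
        = ∑ i, ∑ j, (lam i ^ 2 * lam j ^ 4 + lam i ^ 4 * lam j ^ 2
            - 2 * (lam i ^ 3 * lam j ^ 3)) :=
      Finset.sum_congr rfl fun i _ => Finset.sum_congr rfl fun j _ => by ring
    have h1 : ∑ i, ∑ j, lam i ^ 2 * lam j ^ 4 = S * f4 := by
      rw [hS, hf4, Finset.sum_mul_sum]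
    have h2 : ∑ i, ∑ j, lam i ^ 4 * lam j ^ 2 = f4 * S := by
      rw [hS, hf4, Finset.sum_mul_sum]
    have h3 : ∑ i, ∑ j, lam i ^ 3 * lam j ^ 3 = f3 * f3 := by
      rw [hf3, Finset.sum_mul_sum]
    have split : ∑ i, ∑ j, (lam i ^ 2 * lam j ^ 4 + lam i ^ 4 * lam j ^ 2
            - 2 * (lam i ^ 3 * lam j ^ 3))
        = (∑ i, ∑ j, lam i ^ 2 * lam j ^ 4) + (∑ i, ∑ j, lam i ^ 4 * lam j ^ 2)
            - 2 * ∑ i, ∑ j, lam i ^ 3 * lam j ^ 3 := by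
      simp only [Finset.sum_add_distrib, Finset.sum_sub_distrib, ← Finset.mul_sum]
    rw [expand, split, h1, h2, h3]; ring
  have lagnn : 0 ≤ S * f4 - f3 ^ 2 := by
    rw [lag]; positivity
  set c : ℝ := ((S * f4 - f3 ^ 2) / 4) ^ ((1 : ℝ) / 3) with hc
  have hc0 : 0 ≤ c := Real.rpow_nonneg (by linarith) _
  have hS0 : 0 ≤ S := by rw [hS]; positivity
  -- extraction from Lagrange identity
  have lag_ge : ∀ p q : Fin n, p ≠ q →
      lam p ^ 2 * lam q ^ 2 * (lam p - lam q) ^ 2 ≤ S * f4 - f3 ^ 2 := by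
    intro p q hpq
    set F : Fin n × Fin n → ℝ :=
      fun x => (lam x.1 * lam x.2 ^ 2 - lam x.2 * lam x.1 ^ 2) ^ 2 with hF
    have hprod : ∑ i, ∑ j, (lam i * lam j ^ 2 - lam j * lam i ^ 2) ^ 2
        = ∑ x ∈ Finset.univ ×ˢ Finset.univ, F x :=
      (Finset.sum_product' _ _ _).symm
    have hne : ((p, q) : Fin n × Fin n) ≠ (q, p) := by
      simp [Prod.ext_iff]; intro hh; exact absurd hh hpq
    have hsub : ({(p, q), (q, p)} : Finset (Fin n × Fin n)) ⊆
        Finset.univ ×ˢ Finset.univ := by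
      intro x _; simp
    have hle : F (p, q) + F (q, p) ≤ ∑ x ∈ Finset.univ ×ˢ Finset.univ, F x := by
      rw [← Finset.sum_pair hne]
      exact Finset.sum_le_sum_of_subset_of_nonneg hsub (fun x _ _ => sq_nonneg _)
    have hFpq : F (p, q) + F (q, p) = 2 * (lam p ^ 2 * lam q ^ 2 * (lam p - lam q) ^ 2) := by
      simp only [hF]; ring
    rw [lag, hprod]
    nlinarith [hle, hFpq]
  -- pairwise bound (3.18)/(3.19)
  have pairb : ∀ p q : Fin n, p ≠ q → -(lam p * lam q) ≤ c := by
    intro p q hpq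
    rcases le_or_gt 0 (lam p * lam q) with hpos | hneg
    · linarith
    · have hx : (0 : ℝ) ≤ -(lam p * lam q) := by linarith
      have key : (-(lam p * lam q)) ^ (3 : ℕ) ≤ (S * f4 - f3 ^ 2) / 4 := by
        have := lag_ge p q hpq
        nlinarith [sq_nonneg (lam p + lam q), sq_nonneg (lam p * lam q)]
      calc -(lam p * lam q)
          = ((-(lam p * lam q)) ^ (3 : ℕ)) ^ ((1:ℝ)/3) := by
            rw [← Real.rpow_natCast (-(lam p * lam q)) 3,
              ← Real.rpow_mul hx]
            norm_num
        _ ≤ ((S * f4 - f3 ^ 2) / 4) ^ ((1:ℝ)/3) :=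
            Real.rpow_le_rpow (by positivity) key (by norm_num)
  -- partial sums of squares
  have pair_sq : ∀ p q : Fin n, p ≠ q → lam p ^ 2 + lam q ^ 2 ≤ S := by
    intro p q hpq
    rw [hS]
    have : ∑ x ∈ ({p, q} : Finset (Fin n)), lam x ^ 2 ≤ ∑ i, lam i ^ 2 :=
      Finset.sum_le_sum_of_subset_of_nonneg (fun x _ => Finset.mem_univ x)
        (fun x _ _ => sq_nonneg _)
    rwa [Finset.sum_pair hpq] at this
  have triple_sq : ∀ p q r : Fin n, p ≠ q → p ≠ r → q ≠ r →
      lam p ^ 2 + lam q ^ 2 + lam r ^ 2 ≤ S := by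
    intro p q r hpq hpr hqr
    rw [hS]
    have hsum : ∑ x ∈ ({p, q, r} : Finset (Fin n)), lam x ^ 2
        = lam p ^ 2 + lam q ^ 2 + lam r ^ 2 := by
      rw [Finset.sum_insert (by simp [hpq, hpr]), Finset.sum_pair hqr]; ring
    have : ∑ x ∈ ({p, q, r} : Finset (Fin n)), lam x ^ 2 ≤ ∑ i, lam i ^ 2 :=
      Finset.sum_le_sum_of_subset_of_nonneg (fun x _ => Finset.mem_univ x)
        (fun x _ _ => sq_nonneg _)
    linarith [this, hsum]
  -- pointwise bound
  have pt : ∀ i j k : Fin n,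
      lam i ^ 2 + lam j ^ 2 + lam k ^ 2 - lam i * lam j - lam i * lam k - lam j * lam k
        ≤ S + 2 * c := by
    intro i j k
    by_cases hij : i = j
    · subst hij
      by_cases hik : i = k
      · subst hik; nlinarith
      · have h1 := pairb i k hik
        have h2 := pair_sq i k hik
        nlinarith
    · by_cases hik : i = k
      · subst hik
        have h1 := pairb i j hij
        have h2 := pair_sq i j hij
        nlinarith
      · by_cases hjk : j = k
        · subst hjk
          have h1 := pairb i j hij
          have h2 := pair_sq i j hij
          nlinarith
        · -- all distinct
          have hsq := triple_sq i j k hij hik hjk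
          have b1 := pairb i j hij
          have b2 := pairb i k hik
          have b3 := pairb j k hjk
          -- at most two of the three products are negative
          rcases le_or_gt 0 (lam i * lam j) with h1 | h1
          · nlinarith
          rcases le_or_gt 0 (lam i * lam k) with h2 | h2
          · nlinarith
          rcases le_or_gt 0 (lam j * lam k) with h3 | h3
          · nlinarith
          · exfalso; nlinarith [sq_nonneg (lam i * lam j * lam k)]
  -- symmetrized identity: ∑ Q h² = 3A - 3B
  have hAj : ∑ i, ∑ j, ∑ k, lam j ^ 2 * (h i j k) ^ 2 = A := by
    have e1 : ∑ i, ∑ j, ∑ k, lam j ^ 2 * (h i j k) ^ 2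
        = ∑ i, ∑ j, ∑ k, lam j ^ 2 * (h j i k) ^ 2 :=
      Finset.sum_congr rfl fun i _ => Finset.sum_congr rfl fun j _ =>
        Finset.sum_congr rfl fun k _ => by rw [hsym1]
    rw [e1, ← sum3_swap12 (fun i j k => lam i ^ 2 * (h i j k) ^ 2), hA]
  have hAk : ∑ i, ∑ j, ∑ k, lam k ^ 2 * (h i j k) ^ 2 = A := by
    have e1 : ∑ i, ∑ j, ∑ k, lam k ^ 2 * (h i j k) ^ 2
        = ∑ i, ∑ j, ∑ k, lam k ^ 2 * (h k j i) ^ 2 :=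
      Finset.sum_congr rfl fun i _ => Finset.sum_congr rfl fun j _ =>
        Finset.sum_congr rfl fun k _ => by
          rw [hsym2 i j k, hsym1 i k j, hsym2 k i j]
    rw [e1, ← sum3_swap13 (fun i j k => lam i ^ 2 * (h i j k) ^ 2), hA]
  have hBik : ∑ i, ∑ j, ∑ k, lam i * lam k * (h i j k) ^ 2 = B := by
    have e1 : ∑ i, ∑ j, ∑ k, lam i * lam k * (h i j k) ^ 2
        = ∑ i, ∑ j, ∑ k, lam i * lam k * (h i k j) ^ 2 :=
      Finset.sum_congr rfl fun i _ => Finset.sum_congr rfl fun j _ =>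
        Finset.sum_congr rfl fun k _ => by rw [hsym2]
    rw [e1, ← sum3_swap23 (fun i j k => lam i * lam j * (h i j k) ^ 2), hB]
  have hBjk : ∑ i, ∑ j, ∑ k, lam j * lam k * (h i j k) ^ 2 = B := by
    have e1 : ∑ i, ∑ j, ∑ k, lam j * lam k * (h i j k) ^ 2
        = ∑ i, ∑ j, ∑ k, lam j * lam k * (h j k i) ^ 2 :=
      Finset.sum_congr rfl fun i _ => Finset.sum_congr rfl fun j _ =>
        Finset.sum_congr rfl fun k _ => by rw [hsym1 i j k, hsym2 j i k]
    rw [e1, ← sum3_cyc (fun i j k => lam i * lam j * (h i j k) ^ 2), hB]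
  have key : ∑ i, ∑ j, ∑ k,
      (lam i ^ 2 + lam j ^ 2 + lam k ^ 2 - lam i * lam j - lam i * lam k - lam j * lam k)
        * (h i j k) ^ 2 = 3 * (A - B) := by
    have split : ∑ i, ∑ j, ∑ k,
        (lam i ^ 2 + lam j ^ 2 + lam k ^ 2 - lam i * lam j - lam i * lam k - lam j * lam k)
          * (h i j k) ^ 2
        = (∑ i, ∑ j, ∑ k, lam i ^ 2 * (h i j k) ^ 2)
          + (∑ i, ∑ j, ∑ k, lam j ^ 2 * (h i j k) ^ 2)
          + (∑ i, ∑ j, ∑ k, lam k ^ 2 * (h i j k) ^ 2)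
          - (∑ i, ∑ j, ∑ k, lam i * lam j * (h i j k) ^ 2)
          - (∑ i, ∑ j, ∑ k, lam i * lam k * (h i j k) ^ 2)
          - (∑ i, ∑ j, ∑ k, lam j * lam k * (h i j k) ^ 2) := by
      simp only [← Finset.sum_add_distrib, ← Finset.sum_sub_distrib]
      exact Finset.sum_congr rfl fun i _ => Finset.sum_congr rfl fun j _ =>
        Finset.sum_congr rfl fun k _ => by ring
    rw [split, hAj, hAk, hBik, hBjk, ← hA, ← hB]; ring
  -- conclude
  rw [← key]
  have final : ∑ i, ∑ j, ∑ k,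
      (lam i ^ 2 + lam j ^ 2 + lam k ^ 2 - lam i * lam j - lam i * lam k - lam j * lam k)
        * (h i j k) ^ 2
      ≤ ∑ i, ∑ j, ∑ k, (S + 2 * c) * (h i j k) ^ 2 := by
    refine Finset.sum_le_sum fun i _ => Finset.sum_le_sum fun j _ =>
      Finset.sum_le_sum fun k _ => ?_
    exact mul_le_mul_of_nonneg_right (pt i j k) (sq_nonneg _)
  have hfac : ∑ i, ∑ j, ∑ k, (S + 2 * c) * (h i j k) ^ 2 = (S + 2 * c) * T := by
    rw [hT]; simp only [Finset.mul_sum]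
  rw [hfac] at final
  exact final
end

section
/- Let n ≥ 1 and λ : Fin n → ℝ with Σ_i λ_i = 0; set S = Σ_i λ_i², f₃ = Σ_i λ_i³, f₄ = Σ_i λ_i⁴. Let H : Fin n → Fin n → Fin n → Fin n → ℝ satisfy: (a) H i j k l is invariant under all permutations of its first three arguments (i,j,k); (b) for all i,j,k,l: H i j k l − H i j l k = (λ_i − λ_j)·(1 + λ_i·λ_j)·(δ_{ik}δ_{jl} − δ_{il}δ_{jk}), where δ is the Kronecker delta. Define U i j k l = (1/4)·(H i j k l + H j k l i + H k l i j + H l i j k). Then Σ_{i,j,k,l} (H i j k l)² = Σ_{i,j,k,l} (U i j k l)² + (3/2)·(S·f₄ − f₃² − 2S² + n·S). -/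
set_option maxHeartbeats 1000000

noncomputable def S4' {n : ℕ} (f : Fin n → Fin n → Fin n → Fin n → ℝ) : ℝ :=
  ∑ i, ∑ j, ∑ k, ∑ l, f i j k l

lemma S4'_congr {n : ℕ} {f g : Fin n → Fin n → Fin n → Fin n → ℝ}
    (h : ∀ i j k l, f i j k l = g i j k l) : S4' f = S4' g := by
  simp only [S4']; exact Finset.sum_congr rfl fun i _ => Finset.sum_congr rfl fun j _ =>
    Finset.sum_congr rfl fun k _ => Finset.sum_congr rfl fun l _ => h i j k l

lemma S4'_rot {n : ℕ} (f : Fin n → Fin n → Fin n → Fin n → ℝ) :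
    S4' f = S4' (fun i j k l => f j k l i) := by
  simp only [S4']
  calc (∑ i, ∑ j, ∑ k, ∑ l, f i j k l)
      = ∑ i, ∑ j, ∑ l, ∑ k, f i j k l :=
        Finset.sum_congr rfl fun i _ => Finset.sum_congr rfl fun j _ => Finset.sum_comm
    _ = ∑ i, ∑ l, ∑ j, ∑ k, f i j k l :=
        Finset.sum_congr rfl fun i _ => Finset.sum_comm
    _ = ∑ l, ∑ i, ∑ j, ∑ k, f i j k l := Finset.sum_comm

lemma S4'_add {n : ℕ} (f g : Fin n → Fin n → Fin n → Fin n → ℝ) :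
    S4' (fun i j k l => f i j k l + g i j k l) = S4' f + S4' g := by
  simp [S4', Finset.sum_add_distrib]

lemma S4'_sub {n : ℕ} (f g : Fin n → Fin n → Fin n → Fin n → ℝ) :
    S4' (fun i j k l => f i j k l - g i j k l) = S4' f - S4' g := by
  simp [S4', Finset.sum_sub_distrib]

lemma S4'_smul {n : ℕ} (c : ℝ) (f : Fin n → Fin n → Fin n → Fin n → ℝ) :
    S4' (fun i j k l => c * f i j k l) = c * S4' f := by
  simp [S4', Finset.mul_sum]

lemma sum_ite_const' {α : Type*} [Fintype α] (P : Prop) [Decidable P] (f : α → ℝ) :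
    (∑ x, if P then f x else 0) = if P then ∑ x, f x else 0 := by split <;> simp

lemma collapse_sum {n : ℕ} (lam : Fin n → ℝ) :
    (∑ i, ∑ j, ∑ k, ∑ l,
      (1/4 : ℝ) * ( ((lam k - lam i)*(1 + lam k * lam i))^2 *
                  ((if k = j then (1:ℝ) else 0) * (if i = l then (1:ℝ) else 0))
              + ((lam k - lam i)*(1 + lam k * lam i))^2 *
                  ((if k = l then (1:ℝ) else 0) * (if i = j then (1:ℝ) else 0))
              + ((lam i - lam j)*(1 + lam i * lam j))^2 *
                  ((if i = k then (1:ℝ) else 0) * (if j = l then (1:ℝ) else 0)) ))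
    = (3/4) * ∑ i, ∑ j, ((lam i - lam j)*(1 + lam i * lam j))^2 := by
  simp only [mul_add, mul_ite, ite_mul, mul_one, mul_zero, zero_mul, one_mul,
    sum_ite_const', Finset.sum_ite_eq, Finset.sum_ite_eq', Finset.mem_univ, if_true,
    Finset.sum_add_distrib, Finset.mul_sum]
  rw [← Finset.sum_add_distrib, ← Finset.sum_add_distrib]
  refine Finset.sum_congr rfl fun x _ => ?_
  rw [← Finset.sum_add_distrib, ← Finset.sum_add_distrib]
  refine Finset.sum_congr rfl fun y _ => ?_
  ring

lemma dsum_eval (n : ℕ) (lam : Fin n → ℝ) (htr : ∑ i, lam i = 0)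
    (S f3 f4 : ℝ)
    (hS : S = ∑ i, lam i ^ 2) (hf3 : f3 = ∑ i, lam i ^ 3) (hf4 : f4 = ∑ i, lam i ^ 4) :
    ∑ i, ∑ j, ((lam i - lam j)*(1 + lam i * lam j))^2
      = 2*(S*f4 - f3^2 - 2*S^2 + (n:ℝ)*S) := by
  have inner : ∀ a : ℝ, ∑ j, ((a - lam j)*(1 + a * lam j))^2
      = (n:ℝ)*a^2 + S + 2*a*f3 - 4*a^2*S + a^2*f4 + a^4*S - 2*a^3*f3
        + (2*a - 2*a^3)*(0:ℝ) := by
    intro a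
    have key : ∀ j, ((a - lam j)*(1 + a * lam j))^2
        = a^2 + (2*a^3 - 2*a)*lam j + (1 - 4*a^2 + a^4)*(lam j^2)
          + (2*a - 2*a^3)*(lam j^3) + a^2*(lam j^4) := by
      intro j; ring
    simp only [key, Finset.sum_add_distrib, ← Finset.mul_sum, Finset.sum_const,
      Finset.card_univ, Fintype.card_fin, nsmul_eq_mul, htr, ← hS, ← hf3, ← hf4]
    ring
  simp only [inner]
  simp only [Finset.sum_add_distrib, Finset.sum_sub_distrib, ← Finset.mul_sum,
    ← Finset.sum_mul, Finset.sum_const, Finset.card_univ, Fintype.card_fin,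
    nsmul_eq_mul, htr, ← hS, ← hf3, ← hf4]
  ring

theorem stmt_16 (n : ℕ) (hn : 1 ≤ n) (lam : Fin n → ℝ)
    (htr : ∑ i, lam i = 0)
    (S f3 f4 : ℝ)
    (hS : S = ∑ i, lam i ^ 2) (hf3 : f3 = ∑ i, lam i ^ 3) (hf4 : f4 = ∑ i, lam i ^ 4)
    (H : Fin n → Fin n → Fin n → Fin n → ℝ)
    (hsym1 : ∀ i j k l, H i j k l = H j i k l)
    (hsym2 : ∀ i j k l, H i j k l = H i k j l)
    (hcomm : ∀ i j k l, H i j k l - H i j l k =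
      (lam i - lam j) * (1 + lam i * lam j) *
        ((if i = k then (1 : ℝ) else 0) * (if j = l then (1 : ℝ) else 0) -
         (if i = l then (1 : ℝ) else 0) * (if j = k then (1 : ℝ) else 0)))
    (U : Fin n → Fin n → Fin n → Fin n → ℝ)
    (hU : ∀ i j k l, U i j k l =
      (1 / 4) * (H i j k l + H j k l i + H k l i j + H l i j k)) :
    ∑ i, ∑ j, ∑ k, ∑ l, (H i j k l) ^ 2 =
      (∑ i, ∑ j, ∑ k, ∑ l, (U i j k l) ^ 2) +
        (3 / 2) * (S * f4 - f3 ^ 2 - 2 * S ^ 2 + n * S) := by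
  -- Step 1: the antisymmetric part H - U in closed form
  have hE : ∀ i j k l, H i j k l - U i j k l =
      (1/2) * ( (lam k - lam i)*(1 + lam k * lam i) *
                  ((if k = j then (1:ℝ) else 0) * (if i = l then (1:ℝ) else 0))
              - (lam k - lam i)*(1 + lam k * lam i) *
                  ((if k = l then (1:ℝ) else 0) * (if i = j then (1:ℝ) else 0))
              + (lam i - lam j)*(1 + lam i * lam j) *
                  ((if i = k then (1:ℝ) else 0) * (if j = l then (1:ℝ) else 0)) ) := by
    intro i j k l
    have r1 : H l i j k = H i j l k := by rw [hsym1, hsym2]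
    have r2 : H k i j l = H i j k l := by rw [hsym1, hsym2]
    have r3 : H k i l j = H k l i j := hsym2 k i l j
    have r4 : H k l j i = H j k l i := by rw [hsym2, hsym1]
    have c1 := hcomm i j k l
    have c2 := hcomm k i j l
    have c3 := hcomm k l i j
    rw [r3, r2] at c2
    rw [r4] at c3
    rw [← r1] at c1
    rw [hU i j k l]
    have lin : H i j k l - 1 / 4 * (H i j k l + H j k l i + H k l i j + H l i j k)
        = (1/4) * ((H i j k l - H l i j k) + 2 * (H i j k l - H k l i j)
            + (H k l i j - H j k l i)) := by
      ring
    rw [lin, c1, c2, c3]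
    clear lin c1 c2 c3 hU hcomm hsym1 hsym2 r1 r2 r3 r4 U H
    by_cases hik : i = k <;> by_cases hjl : j = l <;> by_cases hil : i = l <;>
      by_cases hjk : j = k <;> by_cases hkl : k = l <;> by_cases hij : i = j <;>
      subst_vars <;> simp_all [eq_comm] <;> ring
  -- Step 2: its square in closed form
  have hEsq : ∀ i j k l, (H i j k l - U i j k l)^2 =
      (1/4) * ( ((lam k - lam i)*(1 + lam k * lam i))^2 *
                  ((if k = j then (1:ℝ) else 0) * (if i = l then (1:ℝ) else 0))
              + ((lam k - lam i)*(1 + lam k * lam i))^2 *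
                  ((if k = l then (1:ℝ) else 0) * (if i = j then (1:ℝ) else 0))
              + ((lam i - lam j)*(1 + lam i * lam j))^2 *
                  ((if i = k then (1:ℝ) else 0) * (if j = l then (1:ℝ) else 0)) ) := by
    intro i j k l
    rw [hE i j k l]
    clear hE hU hcomm hsym1 hsym2 U H
    by_cases hik : i = k <;> by_cases hjl : j = l <;> by_cases hil : i = l <;>
      by_cases hjk : j = k <;> by_cases hkl : k = l <;> by_cases hij : i = j <;>
      subst_vars <;> simp_all [eq_comm] <;> ring
  -- Step 3: U is cyclic-invariant and ∑ U·H = ∑ U²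
  have hUcyc : ∀ i j k l, U j k l i = U i j k l := by
    intro i j k l; rw [hU, hU]; ring
  have hUH : S4' (fun i j k l => U i j k l * H i j k l)
      = S4' (fun i j k l => U i j k l ^ 2) := by
    have r1 : S4' (fun i j k l => U i j k l * H i j k l)
        = S4' (fun i j k l => U i j k l * H j k l i) := by
      rw [S4'_rot (fun i j k l => U i j k l * H i j k l)]
      exact S4'_congr fun i j k l => by rw [hUcyc]
    have r2 : S4' (fun i j k l => U i j k l * H j k l i)
        = S4' (fun i j k l => U i j k l * H k l i j) := by
      rw [S4'_rot (fun i j k l => U i j k l * H j k l i)]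
      exact S4'_congr fun i j k l => by rw [hUcyc]
    have r3 : S4' (fun i j k l => U i j k l * H k l i j)
        = S4' (fun i j k l => U i j k l * H l i j k) := by
      rw [S4'_rot (fun i j k l => U i j k l * H k l i j)]
      exact S4'_congr fun i j k l => by rw [hUcyc]
    have comb : S4' (fun i j k l => U i j k l * H i j k l)
        + (S4' (fun i j k l => U i j k l * H j k l i)
        + (S4' (fun i j k l => U i j k l * H k l i j)
        + S4' (fun i j k l => U i j k l * H l i j k)))
        = S4' (fun i j k l => (4:ℝ) * U i j k l ^ 2) := by
      rw [← S4'_add, ← S4'_add, ← S4'_add]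
      exact S4'_congr fun i j k l => by
        rw [hU i j k l]; ring
    rw [S4'_smul] at comb
    rw [← r3, ← r2, ← r1] at comb
    linarith
  -- Step 4: put everything together
  have split : S4' (fun i j k l => H i j k l ^ 2)
      = S4' (fun i j k l => (H i j k l - U i j k l)^2)
        + S4' (fun i j k l => U i j k l ^ 2) := by
    have pt : S4' (fun i j k l => H i j k l ^ 2)
        = S4' (fun i j k l => (H i j k l - U i j k l)^2
            + (2 * (U i j k l * H i j k l) - U i j k l ^ 2)) :=
      S4'_congr fun i j k l => by ring
    rw [pt, S4'_add, S4'_sub, S4'_smul, hUH]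
    ring
  have hA : S4' (fun i j k l => (H i j k l - U i j k l)^2)
      = (3/2) * (S * f4 - f3 ^ 2 - 2 * S ^ 2 + (n:ℝ) * S) := by
    have e1 : S4' (fun i j k l => (H i j k l - U i j k l)^2)
        = (3/4) * ∑ i, ∑ j, ((lam i - lam j)*(1 + lam i * lam j))^2 := by
      rw [S4'_congr hEsq]
      exact collapse_sum lam
    rw [e1, dsum_eval n lam htr S f3 f4 hS hf3 hf4]
    ring
  show S4' (fun i j k l => H i j k l ^ 2)
      = S4' (fun i j k l => U i j k l ^ 2)
        + (3 / 2) * (S * f4 - f3 ^ 2 - 2 * S ^ 2 + (n:ℝ) * S)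
  rw [split, hA]
  ring
end

section
/- Let n ≥ 1, and let S > 0, t < 1, f, A, B, C, y be real numbers with n = (1 − t)·S. Let u : Fin n → Fin n → Fin n → Fin n → ℝ satisfy u i j k l = u k l i j, and let a, h : Fin n → Fin n → ℝ be symmetric with Σ_i h i i = 0, Σ_{i,j} (h i j)² = S, Σ_i a i i = 0, Σ_{i,j} (a i j)·(h i j) = 0, Σ_{i,j} (a i j)² = f. Assume Σ_{i,j,k,l} (u i j k l)·(h i j)·δ_{kl} = −t·S²/2, Σ_{i,j,k,l} (u i j k l)·(h i j)·(h k l) = −C, and Σ_{i,j,k,l} (u i j k l)·(a i j)·(h k l) = −B − A/2 + y·C + t·S²/(2(1 − t)). Then for every real α: Σ_{i,j,k,l} (u i j k l)² ≥ 2α·(2B + A − 2yC − t·S²/(1 − t)) − 2α²·S·f + C²/S² + t²·S²/(2(1 − t)). -/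
lemma sum_factor4 {n : ℕ} (x y : Fin n → Fin n → ℝ) :
    ∑ i, ∑ j, ∑ k, ∑ l, x i j * y k l = (∑ i, ∑ j, x i j) * (∑ k, ∑ l, y k l) := by
  simp only [← Finset.mul_sum, ← Finset.sum_mul]

lemma swap4 {n : ℕ} (g : Fin n → Fin n → Fin n → Fin n → ℝ) :
    ∑ i, ∑ j, ∑ k, ∑ l, g i j k l = ∑ k, ∑ l, ∑ i, ∑ j, g i j k l := by
  calc ∑ i, ∑ j, ∑ k, ∑ l, g i j k l
      = ∑ i, ∑ k, ∑ j, ∑ l, g i j k l :=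
        Finset.sum_congr rfl fun i _ => Finset.sum_comm
    _ = ∑ k, ∑ i, ∑ j, ∑ l, g i j k l := Finset.sum_comm
    _ = ∑ k, ∑ i, ∑ l, ∑ j, g i j k l :=
        Finset.sum_congr rfl fun k _ => Finset.sum_congr rfl fun i _ => Finset.sum_comm
    _ = ∑ k, ∑ l, ∑ i, ∑ j, g i j k l :=
        Finset.sum_congr rfl fun k _ => Finset.sum_comm

lemma sum4_congr {n : ℕ} {f g : Fin n → Fin n → Fin n → Fin n → ℝ}
    (h : ∀ i j k l, f i j k l = g i j k l) :
    ∑ i, ∑ j, ∑ k, ∑ l, f i j k l = ∑ i, ∑ j, ∑ k, ∑ l, g i j k l := by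
  simp only [h]

lemma sum2_congr {n : ℕ} {f g : Fin n → Fin n → ℝ}
    (h : ∀ i j, f i j = g i j) :
    ∑ i, ∑ j, f i j = ∑ i, ∑ j, g i j := by
  simp only [h]

set_option maxHeartbeats 1000000 in
theorem stmt_17 (n : ℕ) (hn : 1 ≤ n)
    (S t f A B C y : ℝ) (hS : 0 < S) (ht : t < 1) (hnts : (n : ℝ) = (1 - t) * S)
    (u : Fin n → Fin n → Fin n → Fin n → ℝ)
    (husym : ∀ i j k l, u i j k l = u k l i j)
    (a h : Fin n → Fin n → ℝ)
    (hasym : ∀ i j, a i j = a j i)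
    (hhsym : ∀ i j, h i j = h j i)
    (htrh : ∑ i, h i i = 0)
    (hnormh : ∑ i, ∑ j, (h i j) ^ 2 = S)
    (htra : ∑ i, a i i = 0)
    (horth : ∑ i, ∑ j, (a i j) * (h i j) = 0)
    (hnorma : ∑ i, ∑ j, (a i j) ^ 2 = f)
    (hu1 : ∑ i, ∑ j, ∑ k, ∑ l,
      u i j k l * h i j * (if k = l then (1 : ℝ) else 0) = -(t * S ^ 2) / 2)
    (hu2 : ∑ i, ∑ j, ∑ k, ∑ l, u i j k l * h i j * h k l = -C)
    (hu3 : ∑ i, ∑ j, ∑ k, ∑ l, u i j k l * a i j * h k l =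
      -B - A / 2 + y * C + t * S ^ 2 / (2 * (1 - t))) :
    ∀ α : ℝ, ∑ i, ∑ j, ∑ k, ∑ l, (u i j k l) ^ 2 ≥
      2 * α * (2 * B + A - 2 * y * C - t * S ^ 2 / (1 - t)) - 2 * α ^ 2 * S * f +
        C ^ 2 / S ^ 2 + t ^ 2 * S ^ 2 / (2 * (1 - t)) := by
  intro α
  have h1t : (0:ℝ) < 1 - t := by linarith
  have h1t' : (1:ℝ) - t ≠ 0 := ne_of_gt h1t
  have hS' : S ≠ 0 := ne_of_gt hS
  set β : ℝ := C / S ^ 2 with hβ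
  set γ : ℝ := t / (2 * (1 - t)) with hγ
  set dd : Fin n → Fin n → ℝ := fun i j => if i = j then 1 else 0 with hdd
  set g : Fin n → Fin n → ℝ := fun i j => α * a i j + γ * dd i j + (β / 2) * h i j with hg
  -- scalar sums
  have hnormh2 : ∑ i, ∑ j, h i j * h i j = S := by
    rw [sum2_congr (fun i j => (pow_two (h i j)).symm)]; exact hnormh
  have hnorma2 : ∑ i, ∑ j, a i j * a i j = f := by
    rw [sum2_congr (fun i j => (pow_two (a i j)).symm)]; exact hnorma
  have sdh : ∑ i, ∑ j, dd i j * h i j = 0 := by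
    have e : ∀ i : Fin n, ∑ j, dd i j * h i j = h i i := by
      intro i; simp [hdd]
    simp only [e]; exact htrh
  have sda : ∑ i, ∑ j, dd i j * a i j = 0 := by
    have e : ∀ i : Fin n, ∑ j, dd i j * a i j = a i i := by
      intro i; simp [hdd]
    simp only [e]; exact htra
  have sdd : ∑ i, ∑ j, dd i j * dd i j = (n : ℝ) := by
    have e : ∀ i : Fin n, ∑ j, dd i j * dd i j = 1 := by
      intro i; simp [hdd]
    simp only [e]; simp
  have sgh : ∑ i, ∑ j, g i j * h i j = β * S / 2 := by
    have e : ∀ i j : Fin n, g i j * h i j =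
        α * (a i j * h i j) + γ * (dd i j * h i j) + (β / 2) * (h i j * h i j) := by
      intro i j; simp only [hg]; ring
    rw [sum2_congr e]
    simp only [Finset.sum_add_distrib, ← Finset.mul_sum]
    rw [horth, sdh, hnormh2]; ring
  have sgg : ∑ i, ∑ j, g i j * g i j = α ^ 2 * f + γ ^ 2 * (n : ℝ) + β ^ 2 * S / 4 := by
    have e : ∀ i j : Fin n, g i j * g i j =
        α ^ 2 * (a i j * a i j) + γ ^ 2 * (dd i j * dd i j) + (β ^ 2 / 4) * (h i j * h i j)
          + (2 * α * γ) * (dd i j * a i j) + (α * β) * (a i j * h i j)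
          + (γ * β) * (dd i j * h i j) := by
      intro i j; simp only [hg]; ring
    rw [sum2_congr e]
    simp only [Finset.sum_add_distrib, ← Finset.mul_sum]
    rw [hnorma2, sdd, hnormh2, sda, horth, sdh]; ring
  -- swapped tensor identities
  have hudh : ∑ i, ∑ j, ∑ k, ∑ l, u i j k l * dd i j * h k l = -(t * S ^ 2) / 2 := by
    have e1 : ∀ i j k l : Fin n, u i j k l * dd i j * h k l = u k l i j * dd i j * h k l := by
      intro i j k l; rw [husym]
    have e3 : ∑ i, ∑ j, ∑ k, ∑ l, u i j k l * dd k l * h i j = -(t * S ^ 2) / 2 := by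
      rw [sum4_congr (f := fun i j k l => u i j k l * dd k l * h i j)
          (g := fun i j k l => u i j k l * h i j * (if k = l then (1:ℝ) else 0))
          (by intro i j k l; simp only [hdd]; ring)]
      exact hu1
    rw [sum4_congr e1, swap4 (fun i j k l => u k l i j * dd i j * h k l)]
    exact e3
  have huha : ∑ i, ∑ j, ∑ k, ∑ l, u i j k l * h i j * a k l =
      -B - A / 2 + y * C + t * S ^ 2 / (2 * (1 - t)) := by
    have e1 : ∀ i j k l : Fin n, u i j k l * h i j * a k l = u k l i j * h i j * a k l := by
      intro i j k l; rw [husym]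
    have e3 : ∑ i, ∑ j, ∑ k, ∑ l, u i j k l * h k l * a i j =
        -B - A / 2 + y * C + t * S ^ 2 / (2 * (1 - t)) := by
      rw [sum4_congr (f := fun i j k l => u i j k l * h k l * a i j)
          (g := fun i j k l => u i j k l * a i j * h k l)
          (by intro i j k l; ring)]
      exact hu3
    rw [sum4_congr e1, swap4 (fun i j k l => u k l i j * h i j * a k l)]
    exact e3
  -- cross terms
  have T1 : ∑ i, ∑ j, ∑ k, ∑ l, u i j k l * (g i j * h k l) =
      α * (-B - A / 2 + y * C + t * S ^ 2 / (2 * (1 - t))) + γ * (-(t * S ^ 2) / 2)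
        + (β / 2) * (-C) := by
    have e : ∀ i j k l : Fin n, u i j k l * (g i j * h k l) =
        α * (u i j k l * a i j * h k l) + γ * (u i j k l * dd i j * h k l)
          + (β / 2) * (u i j k l * h i j * h k l) := by
      intro i j k l; simp only [hg]; ring
    rw [sum4_congr e]
    simp only [Finset.sum_add_distrib, ← Finset.mul_sum]
    rw [hu3, hudh, hu2]
  have T2 : ∑ i, ∑ j, ∑ k, ∑ l, u i j k l * (h i j * g k l) =
      α * (-B - A / 2 + y * C + t * S ^ 2 / (2 * (1 - t))) + γ * (-(t * S ^ 2) / 2)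
        + (β / 2) * (-C) := by
    have e : ∀ i j k l : Fin n, u i j k l * (h i j * g k l) =
        α * (u i j k l * h i j * a k l)
          + γ * (u i j k l * h i j * (if k = l then (1:ℝ) else 0))
          + (β / 2) * (u i j k l * h i j * h k l) := by
      intro i j k l; simp only [hg, hdd]; ring
    rw [sum4_congr e]
    simp only [Finset.sum_add_distrib, ← Finset.mul_sum]
    rw [huha, hu1, hu2]
  -- quadratic term
  have T3 : ∑ i, ∑ j, ∑ k, ∑ l, (g i j * h k l + h i j * g k l) ^ 2 =
      2 * (α ^ 2 * f + γ ^ 2 * (n : ℝ) + β ^ 2 * S / 4) * S + 2 * (β * S / 2) ^ 2 := by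
    have e : ∀ i j k l : Fin n, (g i j * h k l + h i j * g k l) ^ 2 =
        (g i j * g i j) * (h k l * h k l) + 2 * ((g i j * h i j) * (g k l * h k l))
          + (h i j * h i j) * (g k l * g k l) := by
      intro i j k l; ring
    rw [sum4_congr e]
    simp only [Finset.sum_add_distrib, ← Finset.mul_sum]
    simp only [← Finset.sum_mul]
    rw [sgg, sgh, hnormh2]
    ring
  -- completion of square
  have key : (0:ℝ) ≤ ∑ i, ∑ j, ∑ k, ∑ l,
      (u i j k l + (g i j * h k l + h i j * g k l)) ^ 2 :=
    Finset.sum_nonneg fun i _ => Finset.sum_nonneg fun j _ => Finset.sum_nonneg fun k _ =>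
      Finset.sum_nonneg fun l _ => sq_nonneg _
  have expand : ∑ i, ∑ j, ∑ k, ∑ l,
      (u i j k l + (g i j * h k l + h i j * g k l)) ^ 2 =
      (∑ i, ∑ j, ∑ k, ∑ l, (u i j k l) ^ 2)
        + 2 * (∑ i, ∑ j, ∑ k, ∑ l, u i j k l * (g i j * h k l))
        + 2 * (∑ i, ∑ j, ∑ k, ∑ l, u i j k l * (h i j * g k l))
        + ∑ i, ∑ j, ∑ k, ∑ l, (g i j * h k l + h i j * g k l) ^ 2 := by
    have e : ∀ i j k l : Fin n,
        (u i j k l + (g i j * h k l + h i j * g k l)) ^ 2 =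
        (u i j k l) ^ 2 + 2 * (u i j k l * (g i j * h k l))
          + 2 * (u i j k l * (h i j * g k l))
          + (g i j * h k l + h i j * g k l) ^ 2 := by
      intro i j k l; ring
    rw [sum4_congr e]
    simp only [Finset.sum_add_distrib, ← Finset.mul_sum]
  rw [expand, T1, T2, T3] at key
  have harith :
      2 * (α * (-B - A / 2 + y * C + t * S ^ 2 / (2 * (1 - t))) + γ * (-(t * S ^ 2) / 2)
          + (β / 2) * (-C))
        + 2 * (α * (-B - A / 2 + y * C + t * S ^ 2 / (2 * (1 - t))) + γ * (-(t * S ^ 2) / 2)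
          + (β / 2) * (-C))
        + (2 * (α ^ 2 * f + γ ^ 2 * (n : ℝ) + β ^ 2 * S / 4) * S + 2 * (β * S / 2) ^ 2)
      = -(2 * α * (2 * B + A - 2 * y * C - t * S ^ 2 / (1 - t)) - 2 * α ^ 2 * S * f +
          C ^ 2 / S ^ 2 + t ^ 2 * S ^ 2 / (2 * (1 - t))) := by
    rw [hβ, hγ, hnts]
    field_simp
    ring
  linarith [key, harith]
end
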